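/- arXiv:2309.13783 — 7 statements merged into one kernel-verified Lean document; each statement's English description precedes it below -/
import Mathlib

section
/- For any fixed integers a and b, C(n+a, ⌊n/2⌋+b) is asymptotically equal to 2^a · C(n, ⌊n/2⌋) as n → ∞; that is, the quotient C(n+a, ⌊n/2⌋+b) / (2^a · C(n, ⌊n/2⌋)) tends to 1. -/
/-- Binomial coefficient with integer arguments, following the convention that it is `0`
unless both arguments are nonnegative (and `Nat.choose` already vanishes when the lower
index exceeds the upper one). -/
def zChoose (a k : ℤ) : ℕ := if 0 ≤ a ∧ 0 ≤ k then Nat.choose a.toNat k.toNat else 0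

open Filter


noncomputable def gfun (a b : ℤ) (n : ℕ) : ℝ :=
  (zChoose ((n : ℤ) + a) (((n / 2 : ℕ) : ℤ) + b) : ℝ)

lemma ev_cond (a b : ℤ) : ∀ᶠ n : ℕ in atTop,
    0 ≤ (n : ℤ) + a ∧ 0 ≤ ((n / 2 : ℕ) : ℤ) + b ∧ ((n / 2 : ℕ) : ℤ) + b ≤ (n : ℤ) + a := by
  filter_upwards [eventually_ge_atTop (2 * (a.natAbs + b.natAbs) + 2)] with n hn
  omega

lemma ev_pos (a b : ℤ) : ∀ᶠ n : ℕ in atTop, 0 < gfun a b n := by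
  filter_upwards [ev_cond a b] with n ⟨h1, h2, h3⟩
  have h : 0 < zChoose ((n:ℤ)+a) (((n/2:ℕ):ℤ)+b) := by
    rw [zChoose, if_pos ⟨h1, h2⟩]
    exact Nat.choose_pos (by omega)
  rw [gfun]
  exact_mod_cast h

lemma zChoose_succ_ratio (x k : ℤ) (hk : 0 ≤ k) (hx : k + 1 ≤ x) :
    (zChoose x (k+1) : ℝ) / zChoose x k = ((x : ℝ) - k) / ((k : ℝ) + 1) := by
  have hx0 : 0 ≤ x := by omega
  rw [zChoose, zChoose, if_pos ⟨hx0, by omega⟩, if_pos ⟨hx0, hk⟩]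
  set m := x.toNat with hm
  set j := k.toNat with hj
  have h1 : (k+1).toNat = j + 1 := by omega
  have hjm : j + 1 ≤ m := by omega
  rw [h1]
  have hxr : ((m:ℝ)) = (x:ℝ) := by exact_mod_cast Int.toNat_of_nonneg hx0
  have hkr : ((j:ℝ)) = (k:ℝ) := by exact_mod_cast Int.toNat_of_nonneg hk
  have hpos : (0:ℝ) < m.choose j := by exact_mod_cast Nat.choose_pos (by omega)
  have key := Nat.choose_succ_right_eq m j
  have keyR : (m.choose (j+1) : ℝ) * ((j:ℝ)+1) = (m.choose j : ℝ) * ((m:ℝ) - j) := by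
    have h2 : ((m - j : ℕ) : ℝ) = (m:ℝ) - j := Nat.cast_sub (by omega)
    calc (m.choose (j+1) : ℝ) * ((j:ℝ)+1) = ((m.choose (j+1) * (j+1) : ℕ) : ℝ) := by push_cast; ring
    _ = ((m.choose j * (m - j) : ℕ) : ℝ) := by rw [key]
    _ = (m.choose j : ℝ) * ((m:ℝ) - j) := by rw [Nat.cast_mul, h2]
  rw [← hxr, ← hkr]
  rw [div_eq_div_iff hpos.ne' (by positivity)]
  linarith [keyR]

lemma zChoose_top_ratio (x k : ℤ) (hk : 0 ≤ k) (hx : k ≤ x) :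
    (zChoose (x+1) k : ℝ) / zChoose x k = ((x : ℝ) + 1) / ((x : ℝ) + 1 - k) := by
  have hx0 : 0 ≤ x := by omega
  rw [zChoose, zChoose, if_pos ⟨by omega, hk⟩, if_pos ⟨hx0, hk⟩]
  set m := x.toNat with hm
  set j := k.toNat with hj
  have h1 : (x+1).toNat = m + 1 := by omega
  have hjm : j ≤ m := by omega
  rw [h1]
  have hxr : ((m:ℝ)) = (x:ℝ) := by exact_mod_cast Int.toNat_of_nonneg hx0
  have hkr : ((j:ℝ)) = (k:ℝ) := by exact_mod_cast Int.toNat_of_nonneg hk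
  have hpos : (0:ℝ) < m.choose j := by exact_mod_cast Nat.choose_pos hjm
  have key := Nat.choose_mul_succ_eq m j
  have keyR : (m.choose j : ℝ) * ((m:ℝ)+1) = ((m+1).choose j : ℝ) * ((m:ℝ) + 1 - j) := by
    have h2 : ((m + 1 - j : ℕ) : ℝ) = (m:ℝ) + 1 - j := by
      rw [Nat.cast_sub (by omega)]; push_cast; ring
    calc (m.choose j : ℝ) * ((m:ℝ)+1) = ((m.choose j * (m+1) : ℕ) : ℝ) := by push_cast; ring
    _ = (((m+1).choose j * (m + 1 - j) : ℕ) : ℝ) := by rw [key]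
    _ = ((m+1).choose j : ℝ) * ((m:ℝ) + 1 - j) := by rw [Nat.cast_mul, h2]
  rw [← hxr, ← hkr]
  have hden : (0:ℝ) < (m:ℝ) + 1 - j := by
    have : (j:ℝ) ≤ m := by exact_mod_cast hjm
    linarith
  rw [div_eq_div_iff hpos.ne' hden.ne']
  push_cast
  linarith [keyR]

lemma tendsto_ratio_helper (c C : ℝ) (num den : ℕ → ℝ)
    (hden : Tendsto den atTop atTop)
    (hb : ∀ᶠ n in atTop, |num n - c * den n| ≤ C) :
    Tendsto (fun n => num n / den n) atTop (nhds c) := by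
  have h0 : Tendsto (fun n => (num n - c * den n) / den n) atTop (nhds 0) := by
    apply squeeze_zero_norm' (a := fun n => C / den n)
    · filter_upwards [hb, hden.eventually_gt_atTop 0] with n h1 h2
      rw [norm_div, Real.norm_eq_abs, Real.norm_eq_abs, abs_of_pos h2]
      gcongr
    · exact tendsto_const_nhds.div_atTop hden
  have h2 := h0.add (tendsto_const_nhds (x := c))
  rw [zero_add] at h2
  apply h2.congr'
  filter_upwards [hden.eventually_gt_atTop 0] with n h3
  field_simp
  ring

lemma tendsto_half : Tendsto (fun n : ℕ => ((n / 2 : ℕ) : ℝ)) atTop atTop := by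
  apply tendsto_natCast_atTop_atTop.comp
  exact tendsto_atTop_atTop.mpr fun b => ⟨2 * b, fun n hn => by omega⟩

lemma tendsto_other_half : Tendsto (fun n : ℕ => (n : ℝ) - ((n / 2 : ℕ) : ℝ)) atTop atTop := by
  apply tendsto_atTop_mono' _ _ (tendsto_half)
  filter_upwards with n
  have h1 : n / 2 ≤ n - n / 2 := by omega
  have h2 : ((n / 2 : ℕ) : ℝ) ≤ ((n - n / 2 : ℕ) : ℝ) := by exact_mod_cast h1
  have h3 : ((n - n / 2 : ℕ) : ℝ) = (n : ℝ) - ((n / 2 : ℕ) : ℝ) :=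
    Nat.cast_sub (Nat.div_le_self n 2)
  linarith

lemma ratio_b (a b : ℤ) :
    Tendsto (fun n => gfun a (b+1) n / gfun a b n) atTop (nhds 1) := by
  have hcongr : ∀ᶠ n : ℕ in atTop, gfun a (b+1) n / gfun a b n =
      ((n : ℝ) + a - (((n / 2 : ℕ) : ℝ) + b)) / ((((n / 2 : ℕ) : ℝ) + b) + 1) := by
    filter_upwards [ev_cond a b, ev_cond a (b+1)] with n ⟨h1, h2, h3⟩ ⟨h4, h5, h6⟩
    have key := zChoose_succ_ratio ((n:ℤ) + a) (((n / 2 : ℕ) : ℤ) + b) h2 (by omega)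
    have e1 : ((n / 2 : ℕ) : ℤ) + (b + 1) = (((n / 2 : ℕ) : ℤ) + b) + 1 := by ring
    rw [gfun, gfun, e1, key]
    simp only [Int.cast_add, Int.cast_natCast, Int.cast_one]
  apply Tendsto.congr' (Filter.EventuallyEq.symm hcongr)
  apply tendsto_ratio_helper 1 (1 + |(a:ℝ) - 2*b - 1|)
    (fun n => (n : ℝ) + a - (((n / 2 : ℕ) : ℝ) + b))
    (fun n => (((n / 2 : ℕ) : ℝ) + b) + 1)
  · exact (tendsto_atTop_add_const_right _ ((b:ℝ) + 1) tendsto_half).congr (fun n => by ring)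
  · filter_upwards with n
    have h1 : (2 * (n / 2) : ℕ) ≤ n := by omega
    have h1' : n ≤ 2 * (n / 2) + 1 := by omega
    have c1 : (2 * ((n / 2 : ℕ) : ℝ)) ≤ (n : ℝ) := by exact_mod_cast h1
    have c2 : (n : ℝ) ≤ 2 * ((n / 2 : ℕ) : ℝ) + 1 := by exact_mod_cast h1'
    have habs : |(n : ℝ) - 2 * ((n / 2 : ℕ) : ℝ)| ≤ 1 :=
      abs_le.mpr ⟨by linarith, by linarith⟩
    calc |(n : ℝ) + a - (((n / 2 : ℕ) : ℝ) + b) - 1 * ((((n / 2 : ℕ) : ℝ) + b) + 1)|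
        = |((n : ℝ) - 2 * ((n / 2 : ℕ) : ℝ)) + ((a:ℝ) - 2*b - 1)| := by congr 1; ring
      _ ≤ |(n : ℝ) - 2 * ((n / 2 : ℕ) : ℝ)| + |(a:ℝ) - 2*b - 1| := abs_add_le _ _
      _ ≤ 1 + |(a:ℝ) - 2*b - 1| := by linarith

lemma ratio_a (a b : ℤ) :
    Tendsto (fun n => gfun (a+1) b n / gfun a b n) atTop (nhds 2) := by
  have hcongr : ∀ᶠ n : ℕ in atTop, gfun (a+1) b n / gfun a b n =
      ((n : ℝ) + a + 1) / ((n : ℝ) + a + 1 - (((n / 2 : ℕ) : ℝ) + b)) := by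
    filter_upwards [ev_cond a b] with n ⟨h1, h2, h3⟩
    have key := zChoose_top_ratio ((n:ℤ) + a) (((n / 2 : ℕ) : ℤ) + b) h2 h3
    have e1 : (n : ℤ) + (a + 1) = ((n : ℤ) + a) + 1 := by ring
    rw [gfun, gfun, e1, key]
    simp only [Int.cast_add, Int.cast_natCast, Int.cast_one]
  apply Tendsto.congr' (Filter.EventuallyEq.symm hcongr)
  apply tendsto_ratio_helper 2 (1 + |2*(b:ℝ) - a - 1|)
    (fun n => (n : ℝ) + a + 1)
    (fun n => (n : ℝ) + a + 1 - (((n / 2 : ℕ) : ℝ) + b))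
  · have : (fun n : ℕ => (n : ℝ) + a + 1 - (((n / 2 : ℕ) : ℝ) + b)) =
        fun n : ℕ => ((n : ℝ) - ((n / 2 : ℕ) : ℝ)) + ((a:ℝ) + 1 - b) := by
      funext n; ring
    rw [this]
    exact tendsto_atTop_add_const_right _ _ tendsto_other_half
  · filter_upwards with n
    have h1 : (2 * (n / 2) : ℕ) ≤ n := by omega
    have h1' : n ≤ 2 * (n / 2) + 1 := by omega
    have c1 : (2 * ((n / 2 : ℕ) : ℝ)) ≤ (n : ℝ) := by exact_mod_cast h1
    have c2 : (n : ℝ) ≤ 2 * ((n / 2 : ℕ) : ℝ) + 1 := by exact_mod_cast h1'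
    have habs : |2 * ((n / 2 : ℕ) : ℝ) - (n : ℝ)| ≤ 1 :=
      abs_le.mpr ⟨by linarith, by linarith⟩
    calc |(n : ℝ) + a + 1 - 2 * ((n : ℝ) + a + 1 - (((n / 2 : ℕ) : ℝ) + b))|
        = |(2 * ((n / 2 : ℕ) : ℝ) - (n : ℝ)) + (2*(b:ℝ) - a - 1)| := by congr 1; ring
      _ ≤ |2 * ((n / 2 : ℕ) : ℝ) - (n : ℝ)| + |2*(b:ℝ) - a - 1| := abs_add_le _ _
      _ ≤ 1 + |2*(b:ℝ) - a - 1| := by linarith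

lemma main_a (a : ℤ) :
    Tendsto (fun n => gfun a 0 n / gfun 0 0 n) atTop (nhds ((2:ℝ) ^ a)) := by
  induction a using Int.induction_on with
  | zero =>
    have h : Tendsto (fun _ : ℕ => (1:ℝ)) atTop (nhds ((2:ℝ) ^ (0:ℤ))) := by
      simpa using tendsto_const_nhds
    refine Tendsto.congr' ?_ h
    filter_upwards [ev_pos 0 0] with n hn
    exact (div_self hn.ne').symm
  | succ i ih =>
    have h := (ratio_a i 0).mul ih
    have hlim : (2:ℝ) * (2:ℝ) ^ (i:ℤ) = (2:ℝ) ^ ((i:ℤ) + 1) := by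
      rw [zpow_add_one₀ (two_ne_zero)]; ring
    rw [hlim] at h
    refine Tendsto.congr' ?_ h
    filter_upwards [ev_pos i 0] with n hn
    exact div_mul_div_cancel₀ hn.ne'
  | pred i ih =>
    have hr := ratio_a (-(i:ℤ) - 1) 0
    have e1 : (-(i:ℤ) - 1) + 1 = -(i:ℤ) := by ring
    rw [e1] at hr
    have hinv := hr.inv₀ (two_ne_zero)
    have h := hinv.mul ih
    have hlim : ((2:ℝ))⁻¹ * (2:ℝ) ^ (-(i:ℤ)) = (2:ℝ) ^ (-(i:ℤ) - 1) := by
      rw [zpow_sub_one₀ (two_ne_zero)]; ring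
    rw [hlim] at h
    refine Tendsto.congr' ?_ h
    filter_upwards [ev_pos (-(i:ℤ)) 0] with n hn1
    rw [inv_div]
    exact div_mul_div_cancel₀ hn1.ne'

lemma main_lemma (a b : ℤ) :
    Tendsto (fun n => gfun a b n / gfun 0 0 n) atTop (nhds ((2:ℝ) ^ a)) := by
  induction b using Int.induction_on with
  | zero => exact main_a a
  | succ i ih =>
    have h := (ratio_b a i).mul ih
    rw [one_mul] at h
    refine Tendsto.congr' ?_ h
    filter_upwards [ev_pos a i] with n hn
    exact div_mul_div_cancel₀ hn.ne'
  | pred i ih =>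
    have hr := ratio_b a (-(i:ℤ) - 1)
    have e1 : (-(i:ℤ) - 1) + 1 = -(i:ℤ) := by ring
    rw [e1] at hr
    have hinv := hr.inv₀ (one_ne_zero)
    have h := hinv.mul ih
    rw [inv_one, one_mul] at h
    refine Tendsto.congr' ?_ h
    filter_upwards [ev_pos a (-(i:ℤ))] with n hn
    simp only [Pi.inv_apply, _root_.inv_div]
    exact div_mul_div_cancel₀ hn.ne'

theorem stmt_2 (a b : ℤ) :
    Filter.Tendsto
      (fun n : ℕ =>
        (zChoose ((n : ℤ) + a) (((n / 2 : ℕ) : ℤ) + b) : ℝ) /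
          ((2 : ℝ) ^ a * (Nat.choose n (n / 2) : ℝ)))
      Filter.atTop (nhds 1) := by
  have hg00 : ∀ n : ℕ, gfun 0 0 n = (Nat.choose n (n / 2) : ℝ) := by
    intro n
    rw [gfun, zChoose]
    simp only [add_zero, Int.toNat_natCast]
    rw [if_pos ⟨Int.natCast_nonneg n, Int.natCast_nonneg _⟩]
  have h := (main_lemma a b).div_const ((2:ℝ) ^ a)
  rw [div_self (by positivity : (2:ℝ) ^ a ≠ 0)] at h
  refine h.congr fun n => ?_
  rw [hg00, gfun]
  rw [div_div, mul_comm]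
end

section
/- Let a, b, c be elements of a lattice such that {a∨b, a∨c, b∨c} is a 3-element antichain. Then the sublattice generated by {a∨b, a∨c, b∨c} is an 8-element Boolean lattice in which a∨b, a∨c, b∨c are the coatoms. -/
open scoped Classical in
/-- helper function mapping subsets of `Fin 3` into the lattice -/
noncomputable def gratzerG {L : Type*} [Lattice L] (z p q r : L) (A : Set (Fin 3)) : L :=
  ((if (0 : Fin 3) ∈ A then p else z) ⊔ (if (1 : Fin 3) ∈ A then q else z)) ⊔
    (if (2 : Fin 3) ∈ A then r else z)

theorem setFin3enum (A : Set (Fin 3)) : A = ∅ ∨ A = {0} ∨ A = {1} ∨ A = {2} ∨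
    A = {0, 1} ∨ A = {0, 2} ∨ A = {1, 2} ∨ A = Set.univ := by
  by_cases h0 : (0:Fin 3) ∈ A <;> by_cases h1 : (1:Fin 3) ∈ A <;>
    by_cases h2 : (2:Fin 3) ∈ A
  · have : A = Set.univ := by ext x; fin_cases x <;> simp [h0, h1, h2]
    tauto
  · have : A = {0, 1} := by ext x; fin_cases x <;> simp [h0, h1, h2]
    tauto
  · have : A = {0, 2} := by ext x; fin_cases x <;> simp [h0, h1, h2]
    tauto
  · have : A = {0} := by ext x; fin_cases x <;> simp [h0, h1, h2]
    tauto
  · have : A = {1, 2} := by ext x; fin_cases x <;> simp [h0, h1, h2]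
    tauto
  · have : A = {1} := by ext x; fin_cases x <;> simp [h0, h1, h2]
    tauto
  · have : A = {2} := by ext x; fin_cases x <;> simp [h0, h1, h2]
    tauto
  · have : A = ∅ := by ext x; fin_cases x <;> simp [h0, h1, h2]
    tauto

theorem gratzer_aux {L : Type*} [Lattice L] (u v w : L)
    (h1 : ¬ u ≤ v) (h2 : ¬ v ≤ u) (h3 : ¬ u ≤ w) (h4 : ¬ w ≤ u)
    (h5 : ¬ v ≤ w) (h6 : ¬ w ≤ v)
    (e1 : u ⊔ w = u ⊔ v) (e2 : v ⊔ w = u ⊔ v)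
    (f1 : u ⊓ v ⊔ u ⊓ w = u) (f2 : u ⊓ v ⊔ v ⊓ w = v) (f3 : u ⊓ w ⊔ v ⊓ w = w) :
    Nonempty ((latticeClosure {u, v, w} : Set L) ≃o Set (Fin 3)) ∧
    Nat.card (latticeClosure {u, v, w} : Set L) = 8 ∧
    (∀ x ∈ ({u, v, w} : Set L),
      x < u ⊔ v ∧ ∀ y ∈ (latticeClosure {u, v, w} : Set L), x < y → y = u ⊔ v) := by
  classical
  set t := u ⊔ v with ht
  set p := u ⊓ v with hp
  set q := u ⊓ w with hq
  set r := v ⊓ w with hr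
  set z := p ⊓ q with hz
  -- basic order facts
  have hpu : p ≤ u := inf_le_left
  have hpv : p ≤ v := inf_le_right
  have hqu : q ≤ u := inf_le_left
  have hqw : q ≤ w := inf_le_right
  have hrv : r ≤ v := inf_le_left
  have hrw : r ≤ w := inf_le_right
  have hzp : z ≤ p := inf_le_left
  have hzq : z ≤ q := inf_le_right
  have hzr : z ≤ r := le_inf (hzp.trans hpv) (hzq.trans hqw)
  have hut : u ≤ t := le_sup_left
  have hvt : v ≤ t := le_sup_right
  have hwt : w ≤ t := by rw [← e2]; exact le_sup_right
  have hpt : p ≤ t := hpu.trans hut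
  have hqt : q ≤ t := hqu.trans hut
  have hrt : r ≤ t := hrv.trans hvt
  have hzt : z ≤ t := hzp.trans hpt
  have hzu : z ≤ u := hzp.trans hpu
  have hzv : z ≤ v := hzp.trans hpv
  have hzw : z ≤ w := hzq.trans hqw
  -- some sup facts
  have hPW : p ⊔ w = t := by
    refine le_antisymm (sup_le hpt hwt) ?_
    rw [ht]
    refine sup_le ?_ ?_
    · rw [← f1]; exact sup_le le_sup_left (hqw.trans le_sup_right)
    · rw [← f2]; exact sup_le le_sup_left (hrw.trans le_sup_right)
  have hQV : q ⊔ v = t := by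
    refine le_antisymm (sup_le hqt hvt) ?_
    rw [← e1]
    refine sup_le ?_ ?_
    · rw [← f1]; exact sup_le (hpv.trans le_sup_right) le_sup_left
    · rw [← f3]; exact sup_le le_sup_left (hrv.trans le_sup_right)
  have hRU : r ⊔ u = t := by
    refine le_antisymm (sup_le hrt hut) ?_
    rw [← e2]
    refine sup_le ?_ ?_
    · rw [← f2]; exact sup_le (hpu.trans le_sup_right) le_sup_left
    · rw [← f3]; exact sup_le (hqu.trans le_sup_right) le_sup_left
  -- non-inequalities
  have ntu : ¬ t ≤ u := fun h => h2 (hvt.trans h)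
  have ntv : ¬ t ≤ v := fun h => h1 (hut.trans h)
  have ntw : ¬ t ≤ w := fun h => h3 (hut.trans h)
  have npw : ¬ p ≤ w := fun h => ntw (by rw [← hPW]; exact sup_le h le_rfl)
  have nqv : ¬ q ≤ v := fun h => ntv (by rw [← hQV]; exact sup_le h le_rfl)
  have nru : ¬ r ≤ u := fun h => ntu (by rw [← hRU]; exact sup_le h le_rfl)
  -- the embedding of subsets of Fin 3
  set g := gratzerG z p q r with hg
  have mem0 : ∀ A, (0:Fin 3) ∈ A → p ≤ g A := by
    intro A h; rw [hg]; unfold gratzerG; rw [if_pos h]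
    exact le_sup_left.trans le_sup_left
  have mem1 : ∀ A, (1:Fin 3) ∈ A → q ≤ g A := by
    intro A h; rw [hg]; unfold gratzerG; rw [if_pos h]
    exact le_sup_right.trans le_sup_left
  have mem2 : ∀ A, (2:Fin 3) ∈ A → r ≤ g A := by
    intro A h; rw [hg]; unfold gratzerG; rw [if_pos h]
    exact le_sup_right
  have ub0 : ∀ A, (0:Fin 3) ∉ A → g A ≤ w := by
    intro A h; rw [hg]; unfold gratzerG; rw [if_neg h]
    refine sup_le (sup_le hzw ?_) ?_
    · by_cases h1 : (1:Fin 3) ∈ A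
      · rw [if_pos h1]; exact hqw
      · rw [if_neg h1]; exact hzw
    · by_cases h2 : (2:Fin 3) ∈ A
      · rw [if_pos h2]; exact hrw
      · rw [if_neg h2]; exact hzw
  have ub1 : ∀ A, (1:Fin 3) ∉ A → g A ≤ v := by
    intro A h; rw [hg]; unfold gratzerG; rw [if_neg h]
    refine sup_le (sup_le ?_ hzv) ?_
    · by_cases h0 : (0:Fin 3) ∈ A
      · rw [if_pos h0]; exact hpv
      · rw [if_neg h0]; exact hzv
    · by_cases h2 : (2:Fin 3) ∈ A
      · rw [if_pos h2]; exact hrv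
      · rw [if_neg h2]; exact hzv
  have ub2 : ∀ A, (2:Fin 3) ∉ A → g A ≤ u := by
    intro A h; rw [hg]; unfold gratzerG; rw [if_neg h]
    refine sup_le (sup_le ?_ ?_) hzu
    · by_cases h0 : (0:Fin 3) ∈ A
      · rw [if_pos h0]; exact hpu
      · rw [if_neg h0]; exact hzu
    · by_cases h1 : (1:Fin 3) ∈ A
      · rw [if_pos h1]; exact hqu
      · rw [if_neg h1]; exact hzu
  have hgt : ∀ A, g A ≤ t := by
    intro A; rw [hg]; unfold gratzerG
    refine sup_le (sup_le ?_ ?_) ?_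
    · by_cases h : (0:Fin 3) ∈ A
      · rw [if_pos h]; exact hpt
      · rw [if_neg h]; exact hzt
    · by_cases h : (1:Fin 3) ∈ A
      · rw [if_pos h]; exact hqt
      · rw [if_neg h]; exact hzt
    · by_cases h : (2:Fin 3) ∈ A
      · rw [if_pos h]; exact hrt
      · rw [if_neg h]; exact hzt
  have gmono : ∀ {A B : Set (Fin 3)}, A ⊆ B → g A ≤ g B := by
    intro A B hAB; rw [hg]; unfold gratzerG
    refine sup_le_sup (sup_le_sup ?_ ?_) ?_
    · by_cases h : (0:Fin 3) ∈ A
      · rw [if_pos h, if_pos (hAB h)]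
      · rw [if_neg h]
        by_cases h' : (0:Fin 3) ∈ B
        · rw [if_pos h']; exact hzp
        · rw [if_neg h']
    · by_cases h : (1:Fin 3) ∈ A
      · rw [if_pos h, if_pos (hAB h)]
      · rw [if_neg h]
        by_cases h' : (1:Fin 3) ∈ B
        · rw [if_pos h']; exact hzq
        · rw [if_neg h']
    · by_cases h : (2:Fin 3) ∈ A
      · rw [if_pos h, if_pos (hAB h)]
      · rw [if_neg h]
        by_cases h' : (2:Fin 3) ∈ B
        · rw [if_pos h']; exact hzr
        · rw [if_neg h']
  have gle : ∀ {A B : Set (Fin 3)}, g A ≤ g B ↔ A ⊆ B := by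
    intro A B
    constructor
    · intro h x hx
      fin_cases x
      · by_contra hB
        exact npw (((mem0 A hx).trans h).trans (ub0 B hB))
      · by_contra hB
        exact nqv (((mem1 A hx).trans h).trans (ub1 B hB))
      · by_contra hB
        exact nru (((mem2 A hx).trans h).trans (ub2 B hB))
    · exact gmono
  have ginj : Function.Injective g := fun A B hAB =>
    Set.Subset.antisymm (gle.mp hAB.le) (gle.mp hAB.ge)
  -- the values of g on the eight subsets
  have gvE : g (∅ : Set (Fin 3)) = z := by
    rw [hg]; unfold gratzerG
    rw [if_neg (Set.notMem_empty _), if_neg (Set.notMem_empty _),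
      if_neg (Set.notMem_empty _), sup_idem, sup_idem]
  have gv0 : g {0} = p := by
    rw [hg]; unfold gratzerG
    rw [if_pos (show (0:Fin 3) ∈ ({0} : Set (Fin 3)) by simp),
      if_neg (show (1:Fin 3) ∉ ({0} : Set (Fin 3)) by simp),
      if_neg (show (2:Fin 3) ∉ ({0} : Set (Fin 3)) by simp),
      sup_eq_left.2 hzp, sup_eq_left.2 hzp]
  have gv1 : g {1} = q := by
    rw [hg]; unfold gratzerG
    rw [if_neg (show (0:Fin 3) ∉ ({1} : Set (Fin 3)) by simp),
      if_pos (show (1:Fin 3) ∈ ({1} : Set (Fin 3)) by simp),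
      if_neg (show (2:Fin 3) ∉ ({1} : Set (Fin 3)) by simp),
      sup_eq_right.2 hzq, sup_eq_left.2 hzq]
  have gv2 : g {2} = r := by
    rw [hg]; unfold gratzerG
    rw [if_neg (show (0:Fin 3) ∉ ({2} : Set (Fin 3)) by simp),
      if_neg (show (1:Fin 3) ∉ ({2} : Set (Fin 3)) by simp),
      if_pos (show (2:Fin 3) ∈ ({2} : Set (Fin 3)) by simp),
      sup_idem, sup_eq_right.2 hzr]
  have gv01 : g {0, 1} = u := by
    rw [hg]; unfold gratzerG
    rw [if_pos (show (0:Fin 3) ∈ ({0, 1} : Set (Fin 3)) by simp),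
      if_pos (show (1:Fin 3) ∈ ({0, 1} : Set (Fin 3)) by simp),
      if_neg (show (2:Fin 3) ∉ ({0, 1} : Set (Fin 3)) by simp),
      f1, sup_eq_left.2 hzu]
  have gv02 : g {0, 2} = v := by
    rw [hg]; unfold gratzerG
    rw [if_pos (show (0:Fin 3) ∈ ({0, 2} : Set (Fin 3)) by simp),
      if_neg (show (1:Fin 3) ∉ ({0, 2} : Set (Fin 3)) by simp),
      if_pos (show (2:Fin 3) ∈ ({0, 2} : Set (Fin 3)) by simp),
      sup_eq_left.2 hzp, f2]
  have gv12 : g {1, 2} = w := by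
    rw [hg]; unfold gratzerG
    rw [if_neg (show (0:Fin 3) ∉ ({1, 2} : Set (Fin 3)) by simp),
      if_pos (show (1:Fin 3) ∈ ({1, 2} : Set (Fin 3)) by simp),
      if_pos (show (2:Fin 3) ∈ ({1, 2} : Set (Fin 3)) by simp),
      sup_eq_right.2 hzq, f3]
  have gvU : g Set.univ = t := by
    rw [hg]; unfold gratzerG
    rw [if_pos (Set.mem_univ _), if_pos (Set.mem_univ _), if_pos (Set.mem_univ _),
      f1, sup_comm u r, hRU]
  -- complete sup/inf tables
  have sup_z_p : z ⊔ p = p := sup_of_le_right hzp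
  have inf_z_p : z ⊓ p = z := inf_of_le_left hzp
  have sup_z_q : z ⊔ q = q := sup_of_le_right hzq
  have inf_z_q : z ⊓ q = z := inf_of_le_left hzq
  have sup_z_r : z ⊔ r = r := sup_of_le_right hzr
  have inf_z_r : z ⊓ r = z := inf_of_le_left hzr
  have sup_z_u : z ⊔ u = u := sup_of_le_right hzu
  have inf_z_u : z ⊓ u = z := inf_of_le_left hzu
  have sup_z_v : z ⊔ v = v := sup_of_le_right hzv
  have inf_z_v : z ⊓ v = z := inf_of_le_left hzv
  have sup_z_w : z ⊔ w = w := sup_of_le_right hzw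
  have inf_z_w : z ⊓ w = z := inf_of_le_left hzw
  have sup_z_t : z ⊔ t = t := sup_of_le_right hzt
  have inf_z_t : z ⊓ t = z := inf_of_le_left hzt
  have sup_p_z : p ⊔ z = p := sup_of_le_left hzp
  have inf_p_z : p ⊓ z = z := inf_of_le_right hzp
  have sup_p_q : p ⊔ q = u := f1
  have inf_p_q : p ⊓ q = z := hz.symm
  have sup_p_r : p ⊔ r = v := f2
  have inf_p_r : p ⊓ r = z := le_antisymm (le_inf (le_inf (inf_le_left.trans hpu) (inf_le_left.trans hpv)) (le_inf (inf_le_left.trans hpu) (inf_le_right.trans hrw))) (le_inf hzp hzr)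
  have sup_p_u : p ⊔ u = u := sup_of_le_right hpu
  have inf_p_u : p ⊓ u = p := inf_of_le_left hpu
  have sup_p_v : p ⊔ v = v := sup_of_le_right hpv
  have inf_p_v : p ⊓ v = p := inf_of_le_left hpv
  have sup_p_w : p ⊔ w = t := hPW
  have inf_p_w : p ⊓ w = z := le_antisymm (le_inf (le_inf (inf_le_left.trans hpu) (inf_le_left.trans hpv)) (le_inf (inf_le_left.trans hpu) inf_le_right)) (le_inf hzp hzw)
  have sup_p_t : p ⊔ t = t := sup_of_le_right hpt
  have inf_p_t : p ⊓ t = p := inf_of_le_left hpt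
  have sup_q_z : q ⊔ z = q := sup_of_le_left hzq
  have inf_q_z : q ⊓ z = z := inf_of_le_right hzq
  have sup_q_p : q ⊔ p = u := by rw [sup_comm]; exact f1
  have inf_q_p : q ⊓ p = z := by rw [inf_comm]
  have sup_q_r : q ⊔ r = w := f3
  have inf_q_r : q ⊓ r = z := le_antisymm (le_inf (le_inf (inf_le_left.trans hqu) (inf_le_right.trans hrv)) (le_inf (inf_le_left.trans hqu) (inf_le_left.trans hqw))) (le_inf hzq hzr)
  have sup_q_u : q ⊔ u = u := sup_of_le_right hqu
  have inf_q_u : q ⊓ u = q := inf_of_le_left hqu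
  have sup_q_v : q ⊔ v = t := hQV
  have inf_q_v : q ⊓ v = z := le_antisymm (le_inf (le_inf (inf_le_left.trans hqu) inf_le_right) (le_inf (inf_le_left.trans hqu) (inf_le_left.trans hqw))) (le_inf hzq hzv)
  have sup_q_w : q ⊔ w = w := sup_of_le_right hqw
  have inf_q_w : q ⊓ w = q := inf_of_le_left hqw
  have sup_q_t : q ⊔ t = t := sup_of_le_right hqt
  have inf_q_t : q ⊓ t = q := inf_of_le_left hqt
  have sup_r_z : r ⊔ z = r := sup_of_le_left hzr
  have inf_r_z : r ⊓ z = z := inf_of_le_right hzr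
  have sup_r_p : r ⊔ p = v := by rw [sup_comm]; exact f2
  have inf_r_p : r ⊓ p = z := le_antisymm (le_inf (le_inf (inf_le_right.trans hpu) (inf_le_left.trans hrv)) (le_inf (inf_le_right.trans hpu) (inf_le_left.trans hrw))) (le_inf hzr hzp)
  have sup_r_q : r ⊔ q = w := by rw [sup_comm]; exact f3
  have inf_r_q : r ⊓ q = z := le_antisymm (le_inf (le_inf (inf_le_right.trans hqu) (inf_le_left.trans hrv)) (le_inf (inf_le_right.trans hqu) (inf_le_left.trans hrw))) (le_inf hzr hzq)
  have sup_r_u : r ⊔ u = t := hRU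
  have inf_r_u : r ⊓ u = z := le_antisymm (le_inf (le_inf inf_le_right (inf_le_left.trans hrv)) (le_inf inf_le_right (inf_le_left.trans hrw))) (le_inf hzr hzu)
  have sup_r_v : r ⊔ v = v := sup_of_le_right hrv
  have inf_r_v : r ⊓ v = r := inf_of_le_left hrv
  have sup_r_w : r ⊔ w = w := sup_of_le_right hrw
  have inf_r_w : r ⊓ w = r := inf_of_le_left hrw
  have sup_r_t : r ⊔ t = t := sup_of_le_right hrt
  have inf_r_t : r ⊓ t = r := inf_of_le_left hrt
  have sup_u_z : u ⊔ z = u := sup_of_le_left hzu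
  have inf_u_z : u ⊓ z = z := inf_of_le_right hzu
  have sup_u_p : u ⊔ p = u := sup_of_le_left hpu
  have inf_u_p : u ⊓ p = p := inf_of_le_right hpu
  have sup_u_q : u ⊔ q = u := sup_of_le_left hqu
  have inf_u_q : u ⊓ q = q := inf_of_le_right hqu
  have sup_u_r : u ⊔ r = t := by rw [sup_comm]; exact hRU
  have inf_u_r : u ⊓ r = z := le_antisymm (le_inf (le_inf inf_le_left (inf_le_right.trans hrv)) (le_inf inf_le_left (inf_le_right.trans hrw))) (le_inf hzu hzr)
  have sup_u_v : u ⊔ v = t := ht.symm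
  have inf_u_v : u ⊓ v = p := hp.symm
  have sup_u_w : u ⊔ w = t := e1
  have inf_u_w : u ⊓ w = q := hq.symm
  have sup_u_t : u ⊔ t = t := sup_of_le_right hut
  have inf_u_t : u ⊓ t = u := inf_of_le_left hut
  have sup_v_z : v ⊔ z = v := sup_of_le_left hzv
  have inf_v_z : v ⊓ z = z := inf_of_le_right hzv
  have sup_v_p : v ⊔ p = v := sup_of_le_left hpv
  have inf_v_p : v ⊓ p = p := inf_of_le_right hpv
  have sup_v_q : v ⊔ q = t := by rw [sup_comm]; exact hQV
  have inf_v_q : v ⊓ q = z := le_antisymm (le_inf (le_inf (inf_le_right.trans hqu) inf_le_left) (le_inf (inf_le_right.trans hqu) (inf_le_right.trans hqw))) (le_inf hzv hzq)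
  have sup_v_r : v ⊔ r = v := sup_of_le_left hrv
  have inf_v_r : v ⊓ r = r := inf_of_le_right hrv
  have sup_v_u : v ⊔ u = t := by rw [sup_comm]
  have inf_v_u : v ⊓ u = p := by rw [inf_comm]
  have sup_v_w : v ⊔ w = t := e2
  have inf_v_w : v ⊓ w = r := hr.symm
  have sup_v_t : v ⊔ t = t := sup_of_le_right hvt
  have inf_v_t : v ⊓ t = v := inf_of_le_left hvt
  have sup_w_z : w ⊔ z = w := sup_of_le_left hzw
  have inf_w_z : w ⊓ z = z := inf_of_le_right hzw
  have sup_w_p : w ⊔ p = t := by rw [sup_comm]; exact hPW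
  have inf_w_p : w ⊓ p = z := le_antisymm (le_inf (le_inf (inf_le_right.trans hpu) (inf_le_right.trans hpv)) (le_inf (inf_le_right.trans hpu) inf_le_left)) (le_inf hzw hzp)
  have sup_w_q : w ⊔ q = w := sup_of_le_left hqw
  have inf_w_q : w ⊓ q = q := inf_of_le_right hqw
  have sup_w_r : w ⊔ r = w := sup_of_le_left hrw
  have inf_w_r : w ⊓ r = r := inf_of_le_right hrw
  have sup_w_u : w ⊔ u = t := by rw [sup_comm]; exact e1
  have inf_w_u : w ⊓ u = q := by rw [inf_comm]
  have sup_w_v : w ⊔ v = t := by rw [sup_comm]; exact e2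
  have inf_w_v : w ⊓ v = r := by rw [inf_comm]
  have sup_w_t : w ⊔ t = t := sup_of_le_right hwt
  have inf_w_t : w ⊓ t = w := inf_of_le_left hwt
  have sup_t_z : t ⊔ z = t := sup_of_le_left hzt
  have inf_t_z : t ⊓ z = z := inf_of_le_right hzt
  have sup_t_p : t ⊔ p = t := sup_of_le_left hpt
  have inf_t_p : t ⊓ p = p := inf_of_le_right hpt
  have sup_t_q : t ⊔ q = t := sup_of_le_left hqt
  have inf_t_q : t ⊓ q = q := inf_of_le_right hqt
  have sup_t_r : t ⊔ r = t := sup_of_le_left hrt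
  have inf_t_r : t ⊓ r = r := inf_of_le_right hrt
  have sup_t_u : t ⊔ u = t := sup_of_le_left hut
  have inf_t_u : t ⊓ u = u := inf_of_le_right hut
  have sup_t_v : t ⊔ v = t := sup_of_le_left hvt
  have inf_t_v : t ⊓ v = v := inf_of_le_right hvt
  have sup_t_w : t ⊔ w = t := sup_of_le_left hwt
  have inf_t_w : t ⊓ w = w := inf_of_le_right hwt

  -- the range of g
  have rmz : z ∈ Set.range g := ⟨∅, gvE⟩
  have rmp : p ∈ Set.range g := ⟨{0}, gv0⟩
  have rmq : q ∈ Set.range g := ⟨{1}, gv1⟩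
  have rmr : r ∈ Set.range g := ⟨{2}, gv2⟩
  have rmu : u ∈ Set.range g := ⟨{0, 1}, gv01⟩
  have rmv : v ∈ Set.range g := ⟨{0, 2}, gv02⟩
  have rmw : w ∈ Set.range g := ⟨{1, 2}, gv12⟩
  have rmt : t ∈ Set.range g := ⟨Set.univ, gvU⟩
  have hsubl : IsSublattice (Set.range g) := by
    constructor
    · rintro x ⟨A, rfl⟩ y ⟨B, rfl⟩
      rcases setFin3enum A with rfl | rfl | rfl | rfl | rfl | rfl | rfl | rfl <;>
        rcases setFin3enum B with rfl | rfl | rfl | rfl | rfl | rfl | rfl | rfl <;>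
        simp only [gvE, gv0, gv1, gv2, gv01, gv02, gv12, gvU, sup_idem,
          sup_z_p, sup_z_q, sup_z_r, sup_z_u, sup_z_v, sup_z_w, sup_z_t, sup_p_z, sup_p_q, sup_p_r, sup_p_u, sup_p_v, sup_p_w, sup_p_t, sup_q_z, sup_q_p, sup_q_r, sup_q_u, sup_q_v, sup_q_w, sup_q_t, sup_r_z, sup_r_p, sup_r_q, sup_r_u, sup_r_v, sup_r_w, sup_r_t, sup_u_z, sup_u_p, sup_u_q, sup_u_r, sup_u_v, sup_u_w, sup_u_t, sup_v_z, sup_v_p, sup_v_q, sup_v_r, sup_v_u, sup_v_w, sup_v_t, sup_w_z, sup_w_p, sup_w_q, sup_w_r, sup_w_u, sup_w_v, sup_w_t, sup_t_z, sup_t_p, sup_t_q, sup_t_r, sup_t_u, sup_t_v, sup_t_w] <;>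
        first
          | exact rmz | exact rmp | exact rmq | exact rmr
          | exact rmu | exact rmv | exact rmw | exact rmt
    · rintro x ⟨A, rfl⟩ y ⟨B, rfl⟩
      rcases setFin3enum A with rfl | rfl | rfl | rfl | rfl | rfl | rfl | rfl <;>
        rcases setFin3enum B with rfl | rfl | rfl | rfl | rfl | rfl | rfl | rfl <;>
        simp only [gvE, gv0, gv1, gv2, gv01, gv02, gv12, gvU, inf_idem,
          inf_z_p, inf_z_q, inf_z_r, inf_z_u, inf_z_v, inf_z_w, inf_z_t, inf_p_z, inf_p_q, inf_p_r, inf_p_u, inf_p_v, inf_p_w, inf_p_t, inf_q_z, inf_q_p, inf_q_r, inf_q_u, inf_q_v, inf_q_w, inf_q_t, inf_r_z, inf_r_p, inf_r_q, inf_r_u, inf_r_v, inf_r_w, inf_r_t, inf_u_z, inf_u_p, inf_u_q, inf_u_r, inf_u_v, inf_u_w, inf_u_t, inf_v_z, inf_v_p, inf_v_q, inf_v_r, inf_v_u, inf_v_w, inf_v_t, inf_w_z, inf_w_p, inf_w_q, inf_w_r, inf_w_u, inf_w_v, inf_w_t, inf_t_z, inf_t_p, inf_t_q, inf_t_r, inf_t_u,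 inf_t_v, inf_t_w] <;>
        first
          | exact rmz | exact rmp | exact rmq | exact rmr
          | exact rmu | exact rmv | exact rmw | exact rmt
  have huvw_sub : ({u, v, w} : Set L) ⊆ Set.range g := by
    rintro x hx
    simp only [Set.mem_insert_iff, Set.mem_singleton_iff] at hx
    rcases hx with rfl | rfl | rfl
    exacts [rmu, rmv, rmw]
  have hucl : u ∈ latticeClosure {u, v, w} := subset_latticeClosure (by simp)
  have hvcl : v ∈ latticeClosure {u, v, w} := subset_latticeClosure (by simp)
  have hwcl : w ∈ latticeClosure {u, v, w} := subset_latticeClosure (by simp)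
  have htcl : t ∈ latticeClosure {u, v, w} :=
    isSublattice_latticeClosure.supClosed hucl hvcl
  have hpcl : p ∈ latticeClosure {u, v, w} :=
    isSublattice_latticeClosure.infClosed hucl hvcl
  have hqcl : q ∈ latticeClosure {u, v, w} :=
    isSublattice_latticeClosure.infClosed hucl hwcl
  have hrcl : r ∈ latticeClosure {u, v, w} :=
    isSublattice_latticeClosure.infClosed hvcl hwcl
  have hzcl : z ∈ latticeClosure {u, v, w} :=
    isSublattice_latticeClosure.infClosed hpcl hqcl
  have hclosure : latticeClosure {u, v, w} = Set.range g := by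
    refine subset_antisymm (latticeClosure_min huvw_sub hsubl) ?_
    rintro x ⟨A, rfl⟩
    rcases setFin3enum A with rfl | rfl | rfl | rfl | rfl | rfl | rfl | rfl <;>
      simp only [gvE, gv0, gv1, gv2, gv01, gv02, gv12, gvU]
    exacts [hzcl, hpcl, hqcl, hrcl, hucl, hvcl, hwcl, htcl]
  have giso : Set (Fin 3) ≃o Set.range g :=
    { Equiv.ofInjective g ginj with map_rel_iff' := fun {A B} => gle }
  refine ⟨⟨(OrderIso.setCongr _ _ hclosure).trans giso.symm⟩, ?_, ?_⟩
  · rw [Nat.card_congr ((OrderIso.setCongr _ _ hclosure).trans giso.symm).toEquiv]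
    simp [Nat.card_eq_fintype_card]
  · intro x hx
    simp only [Set.mem_insert_iff, Set.mem_singleton_iff] at hx
    rcases hx with rfl | rfl | rfl
    · refine ⟨lt_of_le_of_ne hut (fun h => ntu h.ge), ?_⟩
      intro y hy hlt
      rw [hclosure] at hy
      obtain ⟨B, rfl⟩ := hy
      by_cases h2 : (2:Fin 3) ∈ B
      · refine le_antisymm (hgt B) ?_
        rw [← hRU]
        exact sup_le (mem2 B h2) hlt.le
      · exact absurd (hlt.trans_le (ub2 B h2)) (lt_irrefl _)
    · refine ⟨lt_of_le_of_ne hvt (fun h => ntv h.ge), ?_⟩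
      intro y hy hlt
      rw [hclosure] at hy
      obtain ⟨B, rfl⟩ := hy
      by_cases h1' : (1:Fin 3) ∈ B
      · refine le_antisymm (hgt B) ?_
        rw [← hQV]
        exact sup_le (mem1 B h1') hlt.le
      · exact absurd (hlt.trans_le (ub1 B h1')) (lt_irrefl _)
    · refine ⟨lt_of_le_of_ne hwt (fun h => ntw h.ge), ?_⟩
      intro y hy hlt
      rw [hclosure] at hy
      obtain ⟨B, rfl⟩ := hy
      by_cases h0 : (0:Fin 3) ∈ B
      · refine le_antisymm (hgt B) ?_
        rw [← hPW]
        exact sup_le (mem0 B h0) hlt.le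
      · exact absurd (hlt.trans_le (ub0 B h0)) (lt_irrefl _)


/-- Grätzer's Lemma 73: if `{a⊔b, a⊔c, b⊔c}` is a 3-element antichain in a lattice, then
the sublattice it generates is an 8-element Boolean lattice (isomorphic to the lattice of
subsets of a 3-element set) in which `a⊔b`, `a⊔c`, `b⊔c` are the coatoms, i.e. each of
them lies strictly below the top element `a⊔b⊔c` and is covered only by it. -/
theorem stmt_5 {L : Type*} [Lattice L] (a b c : L)
    (h1 : ¬ a ⊔ b ≤ a ⊔ c) (h2 : ¬ a ⊔ c ≤ a ⊔ b)
    (h3 : ¬ a ⊔ b ≤ b ⊔ c) (h4 : ¬ b ⊔ c ≤ a ⊔ b)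
    (h5 : ¬ a ⊔ c ≤ b ⊔ c) (h6 : ¬ b ⊔ c ≤ a ⊔ c) :
    Nonempty ((latticeClosure {a ⊔ b, a ⊔ c, b ⊔ c} : Set L) ≃o Set (Fin 3)) ∧
    Nat.card (latticeClosure {a ⊔ b, a ⊔ c, b ⊔ c} : Set L) = 8 ∧
    (∀ x ∈ ({a ⊔ b, a ⊔ c, b ⊔ c} : Set L),
      x < a ⊔ b ⊔ c ∧
        ∀ y ∈ (latticeClosure {a ⊔ b, a ⊔ c, b ⊔ c} : Set L), x < y → y = a ⊔ b ⊔ c) := by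
  have key : (a ⊔ b) ⊔ (a ⊔ c) = a ⊔ b ⊔ c := by
    simp [sup_assoc, sup_comm, sup_left_comm]
  rw [show a ⊔ b ⊔ c = (a ⊔ b) ⊔ (a ⊔ c) from key.symm]
  refine gratzer_aux (a ⊔ b) (a ⊔ c) (b ⊔ c) h1 h2 h3 h4 h5 h6 ?_ ?_ ?_ ?_ ?_
  · rw [key]; simp [sup_assoc, sup_comm, sup_left_comm]
  · rw [key]; simp [sup_assoc, sup_comm, sup_left_comm]
  · refine le_antisymm (sup_le inf_le_left inf_le_left) (sup_le ?_ ?_)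
    · exact (le_inf le_sup_left le_sup_left).trans le_sup_left
    · exact (le_inf le_sup_right le_sup_left).trans le_sup_right
  · refine le_antisymm (sup_le inf_le_right inf_le_left) (sup_le ?_ ?_)
    · exact (le_inf le_sup_left le_sup_left).trans le_sup_left
    · exact (le_inf le_sup_right le_sup_right).trans le_sup_right
  · refine le_antisymm (sup_le inf_le_right inf_le_right) (sup_le ?_ ?_)
    · exact (le_inf le_sup_right le_sup_left).trans le_sup_left
    · exact (le_inf le_sup_right le_sup_right).trans le_sup_right
end

section
/- For n ≥ 3, the number of pairwise unrelated copies of the 3-crown poset in the powerset lattice of an n-element set is at most ⌊ (1/2)·C(n−1, ⌊(n−1)/2⌋) ⌋. -/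
/-- Two subsets are incomparable under inclusion. -/
def Incomp {n : ℕ} (s t : Finset (Fin n)) : Prop := ¬ s ⊆ t ∧ ¬ t ⊆ s

/-- The six subsets `A,B,C,X,Y,Z` of `[n]` form a copy of the 3-crown poset under
inclusion. -/
def IsCrownCopy {n : ℕ} (A B C X Y Z : Finset (Fin n)) : Prop :=
  A ⊆ X ∧ A ⊆ Y ∧ B ⊆ X ∧ B ⊆ Z ∧ C ⊆ Y ∧ C ⊆ Z ∧
  Incomp A B ∧ Incomp A C ∧ Incomp B C ∧
  Incomp X Y ∧ Incomp X Z ∧ Incomp Y Z ∧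
  Incomp A Z ∧ Incomp B Y ∧ Incomp C X

/-- The underlying family of a crown copy. -/
def CrownFam {n : ℕ} (A B C X Y Z : Finset (Fin n)) : Finset (Finset (Fin n)) :=
  {A, B, C, X, Y, Z}

open Finset Equiv

lemma exists_perm_image {α : Type*} [Fintype α] [DecidableEq α] (A B : Finset α)
    (h : A.card = B.card) : ∃ σ : Equiv.Perm α, ∀ a, σ a ∈ B ↔ a ∈ A := by
  have hA : Fintype.card {a // a ∈ A} = Fintype.card {b // b ∈ B} := by
    simpa using h
  have hAc : Fintype.card {a // ¬ a ∈ A} = Fintype.card {b // ¬ b ∈ B} := by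
    rw [Fintype.card_subtype_compl, Fintype.card_subtype_compl, hA]
  refine ⟨Equiv.subtypeCongr (Fintype.equivOfCardEq hA) (Fintype.equivOfCardEq hAc), ?_⟩
  intro a
  by_cases ha : a ∈ A
  · simp only [Equiv.subtypeCongr, Equiv.trans_apply,
      Equiv.sumCompl_symm_apply_of_pos ha, Equiv.sumCongr_apply, Sum.map_inl,
      Equiv.sumCompl_apply_inl]
    exact ⟨fun _ => ha, fun _ => (Fintype.equivOfCardEq hA ⟨a, ha⟩).2⟩
  · simp only [Equiv.subtypeCongr, Equiv.trans_apply,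
      Equiv.sumCompl_symm_apply_of_neg ha, Equiv.sumCongr_apply, Sum.map_inr,
      Equiv.sumCompl_apply_inr]
    exact ⟨fun hb => absurd hb (Fintype.equivOfCardEq hAc ⟨a, ha⟩).2, fun hb => absurd hb ha⟩

lemma exists_perm_image_point {α : Type*} [Fintype α] [DecidableEq α] (A B : Finset α)
    (h : A.card = B.card) (x v : α) (hx : x ∉ A) (hv : v ∉ B) :
    ∃ σ : Equiv.Perm α, σ x = v ∧ ∀ a, σ a ∈ B ↔ a ∈ A := by
  obtain ⟨π, hπ⟩ := exists_perm_image A B h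
  have hπx : π x ∉ B := fun hb => hx ((hπ x).1 hb)
  refine ⟨π.trans (Equiv.swap (π x) v), by simp [Equiv.swap_apply_left], ?_⟩
  intro a
  by_cases ha : a ∈ A
  · have h1 : π a ∈ B := (hπ a).2 ha
    have h2 : π a ≠ π x := fun e => hπx (e ▸ h1)
    have h3 : π a ≠ v := fun e => hv (e ▸ h1)
    simp [Equiv.swap_apply_of_ne_of_ne h2 h3, h1, ha]
  · have h1 : π a ∉ B := fun hb => ha ((hπ a).1 hb)
    simp only [Equiv.trans_apply]
    rcases eq_or_ne (π a) (π x) with he | he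
    · rw [he, Equiv.swap_apply_left]; exact ⟨fun hb => absurd hb hv, fun hb => absurd hb ha⟩
    · rcases eq_or_ne (π a) v with he2 | he2
      · rw [he2, Equiv.swap_apply_right]
        exact ⟨fun hb => absurd hb hπx, fun hb => absurd hb ha⟩
      · rw [Equiv.swap_apply_of_ne_of_ne he he2]
        exact ⟨fun hb => absurd hb h1, fun hb => absurd hb ha⟩

lemma bollobas_pairs {N : ℕ} {ι : Type*} [Fintype ι] [DecidableEq ι]
    (S T : ι → Finset (Fin (N + 1)))
    (hST : ∀ p, S p ⊂ T p) (hcross : ∀ p q, p ≠ q → ¬ S p ⊆ T q) :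
    Fintype.card ι ≤ Nat.choose N (N / 2) := by
  classical
  -- choose x p ∈ T p \ S p
  choose x hxT hxS using fun p => Finset.exists_of_ssubset (hST p)
  -- the events
  set E : ι → Finset (Equiv.Perm (Fin (N + 1))) := fun p =>
    Finset.univ.filter (fun σ => ∀ i ∈ S p, ∀ j, j ∉ S p → j ≠ x p → σ i < σ j) with hE
  have hmemE : ∀ p (σ : Equiv.Perm (Fin (N+1))),
      σ ∈ E p ↔ ∀ i ∈ S p, ∀ j, j ∉ S p → j ≠ x p → σ i < σ j := by
    intro p σ; simp [hE]
  -- disjointness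
  have hdisj : ∀ p ∈ Finset.univ (α := ι), ∀ q ∈ Finset.univ (α := ι), p ≠ q →
      Disjoint (E p) (E q) := by
    intro p _ q _ hpq
    rw [Finset.disjoint_left]
    intro σ hp hq
    obtain ⟨i, hiS, hiT⟩ := Finset.not_subset.1 (hcross p q hpq)
    obtain ⟨i', hi'S, hi'T⟩ := Finset.not_subset.1 (hcross q p hpq.symm)
    have h1 : σ i < σ i' := (hmemE p σ).1 hp i hiS i'
      (fun h => hi'T ((hST p).subset h)) (fun h => hi'T (h ▸ hxT p))
    have h2 : σ i' < σ i := (hmemE q σ).1 hq i' hi'S i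
      (fun h => hiT ((hST q).subset h)) (fun h => hiT (h ▸ hxT q))
    exact absurd h2 (lt_asymm h1)
  -- cardinality lower bound per p
  have hcard : ∀ p, Nat.factorial (N + 1) ≤ Nat.choose N (N / 2) * (E p).card := by
    intro p
    set s : ℕ := (S p).card with hs
    have hSx : S p ⊆ Finset.univ.erase (x p) := fun a ha =>
      Finset.mem_erase.2 ⟨fun e => hxS p (e ▸ ha), Finset.mem_univ a⟩
    have hsN : s ≤ N := by
      have := Finset.card_le_card hSx
      rwa [Finset.card_erase_of_mem (Finset.mem_univ _), Finset.card_univ,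
        Fintype.card_fin, Nat.add_sub_cancel] at this
    -- the "s smallest elements avoiding v" sets
    set L : Fin (N+1) → Finset (Fin (N+1)) := fun v =>
      Finset.image (fun u : Fin s => v.succAbove (Fin.castLE hsN u)) Finset.univ with hL
    have hLinj : ∀ v : Fin (N+1), Function.Injective (fun u : Fin s => v.succAbove (Fin.castLE hsN u)) :=
      fun v a b hab => Fin.castLE_injective hsN (v.succAbove_right_injective hab)
    have hLcard : ∀ v, (L v).card = s := by
      intro v
      rw [hL]
      rw [Finset.card_image_of_injective _ (hLinj v), Finset.card_univ, Fintype.card_fin]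
    have hvL : ∀ v, v ∉ L v := by
      intro v hv
      rw [hL] at hv
      obtain ⟨u, -, hu⟩ := Finset.mem_image.1 hv
      exact Fin.succAbove_ne v _ hu
    have hLlt : ∀ v, ∀ b ∈ L v, ∀ c, c ∉ L v → c ≠ v → b < c := by
      intro v b hb c hc hcv
      obtain ⟨u, -, hu⟩ := Finset.mem_image.1 (by rwa [hL] at hb)
      obtain ⟨w, hw⟩ := Fin.exists_succAbove_eq hcv
      have hws : ¬ (w : ℕ) < s := by
        intro hlt
        apply hc
        rw [hL]
        refine Finset.mem_image.2 ⟨⟨(w : ℕ), hlt⟩, Finset.mem_univ _, ?_⟩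
        rw [← hw]; congr 1
      rw [← hu, ← hw]
      exact Fin.strictMono_succAbove v (by
        rw [Fin.lt_def]; simp; omega)
    -- for each v, a permutation in E p with value v at x p
    have hσ : ∀ v : Fin (N+1), ∃ σ : Equiv.Perm (Fin (N+1)),
        σ (x p) = v ∧ ∀ a, σ a ∈ L v ↔ a ∈ S p := by
      intro v
      exact exists_perm_image_point (S p) (L v) (by rw [hLcard v]) (x p) v (hxS p) (hvL v)
    choose σ hσx hσB using hσ
    have hσE : ∀ v, σ v ∈ E p := by
      intro v
      rw [hmemE]
      intro i hi j hjS hjx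
      have h1 : σ v i ∈ L v := (hσB v i).2 hi
      have h2 : σ v j ∉ L v := fun hb => hjS ((hσB v j).1 hb)
      have h3 : σ v j ≠ v := fun e => hjx ((σ v).injective (e.trans (hσx v).symm))
      exact hLlt v _ h1 _ h2 h3
    -- build an injection to lower bound the cardinality of `E p`
    set R : Finset (Fin (N+1)) := (insert (x p) (S p))ᶜ with hR
    have hmemR : ∀ a, a ∈ R ↔ (a ∉ S p ∧ a ≠ x p) := by
      intro a
      rw [hR, Finset.mem_compl, Finset.mem_insert]
      tauto
    have hRcard : R.card = N - s := by
      rw [hR, Finset.card_compl, Finset.card_insert_of_notMem (hxS p), Fintype.card_fin, ← hs]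
      omega
    -- gluing permutations of S p and R
    let glue : Equiv.Perm {a // a ∈ S p} → Equiv.Perm {a // a ∈ R} →
        Equiv.Perm (Fin (N+1)) := fun ρ₁ ρ₂ =>
      (ρ₁.extendDomain (Equiv.refl _)) * (ρ₂.extendDomain (Equiv.refl _))
    have glue_S : ∀ ρ₁ ρ₂, ∀ a (ha : a ∈ S p), glue ρ₁ ρ₂ a = ↑(ρ₁ ⟨a, ha⟩) := by
      intro ρ₁ ρ₂ a ha
      have haR : a ∉ R := fun h => ((hmemR a).1 h).1 ha
      show (ρ₁.extendDomain (Equiv.refl _)) ((ρ₂.extendDomain (Equiv.refl _)) a) = _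
      rw [Equiv.Perm.extendDomain_apply_not_subtype _ _ haR,
        Equiv.Perm.extendDomain_apply_subtype _ _ ha]
      rfl
    have glue_R : ∀ ρ₁ ρ₂, ∀ a (ha : a ∈ R), glue ρ₁ ρ₂ a = ↑(ρ₂ ⟨a, ha⟩) := by
      intro ρ₁ ρ₂ a ha
      show (ρ₁.extendDomain (Equiv.refl _)) ((ρ₂.extendDomain (Equiv.refl _)) a) = _
      rw [Equiv.Perm.extendDomain_apply_subtype _ _ ha]
      simp only [Equiv.refl_symm, Equiv.refl_apply]
      have h2 : ((ρ₂ ⟨a, ha⟩ : {a // a ∈ R}) : Fin (N+1)) ∉ S p :=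
        ((hmemR _).1 (ρ₂ ⟨a, ha⟩).2).1
      rw [Equiv.Perm.extendDomain_apply_not_subtype _ _ h2]
    have glue_x : ∀ ρ₁ ρ₂, glue ρ₁ ρ₂ (x p) = x p := by
      intro ρ₁ ρ₂
      have h1 : x p ∉ R := fun h => ((hmemR _).1 h).2 rfl
      show (ρ₁.extendDomain (Equiv.refl _)) ((ρ₂.extendDomain (Equiv.refl _)) (x p)) = _
      rw [Equiv.Perm.extendDomain_apply_not_subtype _ _ h1,
        Equiv.Perm.extendDomain_apply_not_subtype _ _ (hxS p)]
    -- the injection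
    have hinj : Fintype.card (Fin (N+1) × Equiv.Perm {a // a ∈ S p} × Equiv.Perm {a // a ∈ R})
        ≤ (E p).card := by
      rw [← Fintype.card_coe (E p)]
      apply Fintype.card_le_of_injective
        (fun d => (⟨σ d.1 * glue d.2.1 d.2.2, ?_⟩ : {τ // τ ∈ E p}))
      · -- injectivity
        rintro ⟨v₁, ρ₁, ρ₂⟩ ⟨v₁', ρ₁', ρ₂'⟩ hd
        have hd' : σ v₁ * glue ρ₁ ρ₂ = σ v₁' * glue ρ₁' ρ₂' := congrArg Subtype.val hd
        have hv : v₁ = v₁' := by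
          have := congrArg (fun τ : Equiv.Perm (Fin (N+1)) => τ (x p)) hd'
          simpa [Equiv.Perm.mul_apply, glue_x, hσx] using this
        subst hv
        have hg : glue ρ₁ ρ₂ = glue ρ₁' ρ₂' := by
          have := mul_left_cancel hd'
          exact this
        have hρ₁ : ρ₁ = ρ₁' := by
          apply Equiv.ext
          rintro ⟨a, ha⟩
          apply Subtype.ext
          have e1 := glue_S ρ₁ ρ₂ a ha
          have e2 := glue_S ρ₁' ρ₂' a ha
          rw [hg] at e1
          exact e1.symm.trans e2
        have hρ₂ : ρ₂ = ρ₂' := by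
          apply Equiv.ext
          rintro ⟨a, ha⟩
          apply Subtype.ext
          have e1 := glue_R ρ₁ ρ₂ a ha
          have e2 := glue_R ρ₁' ρ₂' a ha
          rw [hg] at e1
          exact e1.symm.trans e2
        simp [hρ₁, hρ₂]
      · -- membership in E p
        obtain ⟨v, ρ₁, ρ₂⟩ := d
        rw [hmemE]
        intro i hi j hjS hjx
        have hgi : (glue ρ₁ ρ₂) i ∈ S p := by rw [glue_S ρ₁ ρ₂ i hi]; exact (ρ₁ ⟨i, hi⟩).2
        have hjR : j ∈ R := (hmemR j).2 ⟨hjS, hjx⟩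
        have hgj : (glue ρ₁ ρ₂) j ∈ R := by rw [glue_R ρ₁ ρ₂ j hjR]; exact (ρ₂ ⟨j, hjR⟩).2
        have hgj' := (hmemR _).1 hgj
        exact (hmemE p (σ v)).1 (hσE v) _ hgi _ hgj'.1 hgj'.2
    have hDcard : Fintype.card
        (Fin (N+1) × Equiv.Perm {a // a ∈ S p} × Equiv.Perm {a // a ∈ R})
        = (N+1) * (Nat.factorial s * Nat.factorial (N - s)) := by
      rw [Fintype.card_prod, Fintype.card_prod, Fintype.card_fin,
        Fintype.card_perm, Fintype.card_perm]
      congr 2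
      · rw [Fintype.card_coe]
      · rw [Fintype.card_coe, hRcard]
    -- conclude the per-index bound
    have h1 : (N+1) * (Nat.factorial s * Nat.factorial (N - s)) ≤ (E p).card := by
      rw [← hDcard]; exact hinj
    calc Nat.factorial (N + 1)
        = (N + 1) * Nat.factorial N := Nat.factorial_succ N
      _ = (N + 1) * (Nat.choose N s * Nat.factorial s * Nat.factorial (N - s)) := by
          rw [Nat.choose_mul_factorial_mul_factorial hsN]
      _ ≤ (N + 1) * (Nat.choose N (N / 2) * Nat.factorial s * Nat.factorial (N - s)) := by
          apply Nat.mul_le_mul_left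
          exact Nat.mul_le_mul_right _ (Nat.mul_le_mul_right _ (Nat.choose_le_middle s N))
      _ = Nat.choose N (N / 2) * ((N+1) * (Nat.factorial s * Nat.factorial (N - s))) := by ring
      _ ≤ Nat.choose N (N / 2) * (E p).card := Nat.mul_le_mul_left _ h1
  -- sum up
  have hsum : Fintype.card ι * Nat.factorial (N + 1)
      ≤ Nat.choose N (N / 2) * Nat.factorial (N + 1) := by
    calc Fintype.card ι * Nat.factorial (N + 1)
        = ∑ _p : ι, Nat.factorial (N + 1) := by
          rw [Finset.sum_const, Finset.card_univ, smul_eq_mul]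
      _ ≤ ∑ p : ι, Nat.choose N (N / 2) * (E p).card := Finset.sum_le_sum fun p _ => hcard p
      _ = Nat.choose N (N / 2) * ∑ p : ι, (E p).card := by rw [Finset.mul_sum]
      _ = Nat.choose N (N / 2) * (Finset.univ.biUnion E).card := by
          rw [Finset.card_biUnion hdisj]
      _ ≤ Nat.choose N (N / 2) * Fintype.card (Equiv.Perm (Fin (N+1))) :=
          Nat.mul_le_mul_left _ (by
            rw [← Finset.card_univ]; exact Finset.card_le_card (Finset.subset_univ _))
      _ = Nat.choose N (N / 2) * Nat.factorial (N + 1) := by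
          rw [Fintype.card_perm, Fintype.card_fin]
  exact Nat.le_of_mul_le_mul_right hsum (Nat.factorial_pos (N + 1))

/-- For `n ≥ 3`, the number of pairwise unrelated copies of the 3-crown poset in the
powerset of `[n]` is at most `⌊C(n−1, ⌊(n−1)/2⌋)/2⌋`. -/
theorem stmt_10 (n : ℕ) (hn : 3 ≤ n) (k : ℕ)
    (A B C X Y Z : Fin k → Finset (Fin n))
    (hcopy : ∀ i, IsCrownCopy (A i) (B i) (C i) (X i) (Y i) (Z i))
    (hunrel : ∀ i j, i ≠ j →
      ∀ s ∈ CrownFam (A i) (B i) (C i) (X i) (Y i) (Z i),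
        ∀ t ∈ CrownFam (A j) (B j) (C j) (X j) (Y j) (Z j), Incomp s t) :
    k ≤ Nat.choose (n - 1) ((n - 1) / 2) / 2 := by
  obtain ⟨N, rfl⟩ : ∃ N, n = N + 1 := ⟨n - 1, by omega⟩
  -- set up the 2k set pairs
  have S : (Fin k ⊕ Fin k) → Finset (Fin (N + 1)) := Sum.elim A C
  have memFam : ∀ i, A i ∈ CrownFam (A i) (B i) (C i) (X i) (Y i) (Z i)
      ∧ C i ∈ CrownFam (A i) (B i) (C i) (X i) (Y i) (Z i)
      ∧ X i ∈ CrownFam (A i) (B i) (C i) (X i) (Y i) (Z i)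
      ∧ Z i ∈ CrownFam (A i) (B i) (C i) (X i) (Y i) (Z i) := by
    intro i
    simp [CrownFam]
  have hST : ∀ p, Sum.elim A C p ⊂ Sum.elim X Z p := by
    rintro (i | i) <;> simp only [Sum.elim_inl, Sum.elim_inr]
    · obtain ⟨hAX, hAY, -, -, -, -, -, -, -, hXY, -, -, -, -, -⟩ := hcopy i
      refine Finset.ssubset_iff_subset_ne.2 ⟨hAX, fun he => ?_⟩
      exact hXY.1 (he ▸ hAY)
    · obtain ⟨-, -, -, -, hCY, hCZ, -, -, -, -, -, hYZ, -, -, -⟩ := hcopy i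
      refine Finset.ssubset_iff_subset_ne.2 ⟨hCZ, fun he => ?_⟩
      exact hYZ.2 (he ▸ hCY)
  have hcross : ∀ p q, p ≠ q → ¬ Sum.elim A C p ⊆ Sum.elim X Z q := by
    rintro (i | i) (j | j) hpq <;> simp only [Sum.elim_inl, Sum.elim_inr]
    · have hij : i ≠ j := fun h => hpq (by rw [h])
      exact (hunrel i j hij _ (memFam i).1 _ (memFam j).2.2.1).1
    · rcases eq_or_ne i j with rfl | hij
      · obtain ⟨-, -, -, -, -, -, -, -, -, -, -, -, hAZ, -, -⟩ := hcopy i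
        exact hAZ.1
      · exact (hunrel i j hij _ (memFam i).1 _ (memFam j).2.2.2).1
    · rcases eq_or_ne i j with rfl | hij
      · obtain ⟨-, -, -, -, -, -, -, -, -, -, -, -, -, -, hCX⟩ := hcopy i
        exact hCX.1
      · exact (hunrel i j hij _ (memFam i).2.1 _ (memFam j).2.2.1).1
    · have hij : i ≠ j := fun h => hpq (by rw [h])
      exact (hunrel i j hij _ (memFam i).2.1 _ (memFam j).2.2.2).1
  have hb := bollobas_pairs (Sum.elim A C) (Sum.elim X Z) hST hcross
  rw [Fintype.card_sum, Fintype.card_fin] at hb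
  simp only [Nat.add_sub_cancel]
  rw [Nat.le_div_iff_mul_le (by norm_num : 0 < 2)]
  omega
end

section
/- Let r ≥ 3 and n ≥ r. Then Sp(FSP(r,0,r), n) ≤ ⌊ (1/2)·C(n+2−r, ⌊(n+2−r)/2⌋) ⌋, where FSP(r,0,r) is the poset of nonempty proper subsets of an r-element set ordered by inclusion. -/
/-- The poset `FSP(r,0,r)` of nontrivial (nonempty, proper) subsets of `[r]`,
ordered by inclusion. -/
def NTS (r : ℕ) := {J : Finset (Fin r) // J.Nonempty ∧ J ≠ Finset.univ}

/-- `e` is a copy of `FSP(r,0,r)` in the powerset of `[n]`: an order embedding of the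
poset of nontrivial subsets of `[r]` into the subsets of `[n]` ordered by inclusion. -/
def IsNTSCopy (r n : ℕ) (e : NTS r → Finset (Fin n)) : Prop :=
  ∀ J K : NTS r, J.1 ⊆ K.1 ↔ e J ⊆ e K


open Finset

variable {n : ℕ}

/-- Permutations placing all of `U` (within `D`) before all of `D \ U`. -/
def cutPerms (D U : Finset (Fin n)) : Finset (Equiv.Perm (Fin n)) :=
  Finset.univ.filter (fun g => ∀ x ∈ U, ∀ y ∈ D \ U, g x < g y)

lemma exists_cut (D : Finset (Fin n)) (a : ℕ) (ha : a ≤ D.card) (g : Equiv.Perm (Fin n)) :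
    ∃ U ∈ D.powersetCard a, g ∈ cutPerms D U := by
  classical
  set rank : Fin n → ℕ := fun x => (D.filter (fun y => g y < g x)).card with hrank
  have key : ∀ x ∈ D, ∀ z ∈ D, g x < g z → rank x < rank z := by
    intro x hx z hz hlt
    apply Finset.card_lt_card
    rw [Finset.ssubset_iff_of_subset]
    · exact ⟨x, by simp [hx, hlt], by simp⟩
    · intro y hy
      simp only [mem_filter] at hy ⊢
      exact ⟨hy.1, hy.2.trans hlt⟩
  have hinj : Set.InjOn rank D := by
    intro x hx y hy hxy
    by_contra hne
    have : g x ≠ g y := fun h => hne (g.injective h)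
    rcases lt_or_gt_of_ne this with h | h
    · exact absurd hxy (Nat.ne_of_lt (key x hx y hy h))
    · exact absurd hxy.symm (Nat.ne_of_lt (key y hy x hx h))
  have himg : D.image rank = Finset.range D.card := by
    apply Finset.eq_of_subset_of_card_le
    · intro m hm
      simp only [mem_image] at hm
      obtain ⟨x, hx, rfl⟩ := hm
      rw [Finset.mem_range]
      calc rank x ≤ (D.erase x).card := by
            apply Finset.card_le_card
            intro y hy
            simp only [mem_filter] at hy
            exact Finset.mem_erase.2 ⟨fun h => absurd (congrArg g h) (ne_of_lt hy.2), hy.1⟩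
        _ < D.card := Finset.card_erase_lt_of_mem hx
    · rw [Finset.card_range, Finset.card_image_of_injOn hinj]
  refine ⟨D.filter (fun x => rank x < a), ?_, ?_⟩
  · rw [Finset.mem_powersetCard]
    refine ⟨Finset.filter_subset _ _, ?_⟩
    have h1 : (D.filter (fun x => rank x < a)).image rank = Finset.range a := by
      ext m
      simp only [Finset.mem_image, Finset.mem_filter, Finset.mem_range]
      constructor
      · rintro ⟨x, ⟨-, h⟩, rfl⟩; exact h
      · intro hm
        have hmem : m ∈ D.image rank := by
          rw [himg]; exact Finset.mem_range.2 (lt_of_lt_of_le hm ha)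
        obtain ⟨x, hxD, hxm⟩ := Finset.mem_image.1 hmem
        exact ⟨x, ⟨hxD, by omega⟩, hxm⟩
    have h2 := Finset.card_image_of_injOn (hinj.mono (Finset.filter_subset _ _ : (D.filter (fun x => rank x < a)) ⊆ D))
    rw [h1, Finset.card_range] at h2
    omega
  · simp only [cutPerms, mem_filter, mem_univ, true_and]
    intro x hx y hy
    obtain ⟨hxD, hxa⟩ : x ∈ D ∧ rank x < a := by
      simpa using hx
    have hyD : y ∈ D := (Finset.mem_sdiff.1 hy).1
    have hya : ¬ rank y < a := by
      have h2 := (Finset.mem_sdiff.1 hy).2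
      intro h
      exact h2 (by simpa using (⟨hyD, h⟩ : y ∈ D ∧ rank y < a))
    by_contra hcon
    have hne : x ≠ y := by
      rintro rfl; omega
    have hlt : g y < g x := by
      rcases lt_or_gt_of_ne (fun h : g x = g y => hne (g.injective h)) with h | h
      · exact absurd h hcon
      · exact h
    have := key y hyD x hxD hlt
    omega

lemma cut_disjoint {D : Finset (Fin n)} {a : ℕ} {U U' : Finset (Fin n)}
    (hU : U ∈ D.powersetCard a) (hU' : U' ∈ D.powersetCard a) (hne : U ≠ U') :
    Disjoint (cutPerms D U) (cutPerms D U') := by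
  classical
  rw [Finset.mem_powersetCard] at hU hU'
  rw [Finset.disjoint_left]
  intro g hg hg'
  simp only [cutPerms, mem_filter, mem_univ, true_and] at hg hg'
  have h1 : ¬ U ⊆ U' := by
    intro hss
    exact hne (Finset.eq_of_subset_of_card_le hss (by omega))
  obtain ⟨x, hxU, hxU'⟩ := Finset.not_subset.1 h1
  have h2 : ¬ U' ⊆ U := by
    intro hss
    exact hne (Finset.eq_of_subset_of_card_le hss (by omega)).symm
  obtain ⟨y, hyU', hyU⟩ := Finset.not_subset.1 h2
  have := hg x hxU y (Finset.mem_sdiff.2 ⟨hU'.1 hyU', hyU⟩)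
  have := hg' y hyU' x (Finset.mem_sdiff.2 ⟨hU.1 hxU, hxU'⟩)
  omega

lemma cut_card_le {D : Finset (Fin n)} {a : ℕ} {U W : Finset (Fin n)}
    (hU : U ∈ D.powersetCard a) (hW : W ∈ D.powersetCard a) :
    (cutPerms D U).card ≤ (cutPerms D W).card := by
  classical
  rw [Finset.mem_powersetCard] at hU hW
  -- build a permutation τ with τ(W) ⊆ U and τ(D \ W) ⊆ D \ U
  have hc1 : W.card = U.card := by omega
  have hc2 : ((D \ W) : Finset (Fin n)).card = ((D \ U) : Finset (Fin n)).card := by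
    rw [Finset.card_sdiff_of_subset hW.1, Finset.card_sdiff_of_subset hU.1, hU.2, hW.2]
  let e1 : (W : Finset (Fin n)) ≃ (U : Finset (Fin n)) := Finset.equivOfCardEq hc1
  let e2 : ((D \ W) : Finset (Fin n)) ≃ ((D \ U) : Finset (Fin n)) := Finset.equivOfCardEq hc2
  let τf : Fin n → Fin n := fun x =>
    if hx : x ∈ W then (e1 ⟨x, hx⟩ : Fin n)
    else if hx2 : x ∈ D \ W then (e2 ⟨x, hx2⟩ : Fin n) else x
  have hτW : ∀ x (hx : x ∈ W), τf x = (e1 ⟨x, hx⟩ : Fin n) := by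
    intro x hx; simp only [τf, dif_pos hx]
  have hτDW : ∀ x (hx : x ∈ D \ W), τf x = (e2 ⟨x, hx⟩ : Fin n) := by
    intro x hx
    have hxW : x ∉ W := (Finset.mem_sdiff.1 hx).2
    simp only [τf, dif_neg hxW, dif_pos hx]
  have hτout : ∀ x, x ∉ D → τf x = x := by
    intro x hx
    have hxW : x ∉ W := fun h => hx (hW.1 h)
    have hxDW : x ∉ D \ W := fun h => hx (Finset.mem_sdiff.1 h).1
    simp only [τf, dif_neg hxW, dif_neg hxDW]
  have hinj : Function.Injective τf := by
    intro x y hxy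
    have loc : ∀ z, (z ∈ W ∧ τf z ∈ U) ∨ (z ∈ D \ W ∧ τf z ∈ D \ U) ∨ (z ∉ D ∧ τf z = z) := by
      intro z
      by_cases hz : z ∈ W
      · exact Or.inl ⟨hz, by rw [hτW z hz]; exact (e1 ⟨z, hz⟩).2⟩
      · by_cases hz2 : z ∈ D
        · have hz3 : z ∈ D \ W := Finset.mem_sdiff.2 ⟨hz2, hz⟩
          exact Or.inr (Or.inl ⟨hz3, by rw [hτDW z hz3]; exact (e2 ⟨z, hz3⟩).2⟩)
        · exact Or.inr (Or.inr ⟨hz2, hτout z hz2⟩)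
    rcases loc x with ⟨hx, hx'⟩ | ⟨hx, hx'⟩ | ⟨hx, hx'⟩ <;>
      rcases loc y with ⟨hy, hy'⟩ | ⟨hy, hy'⟩ | ⟨hy, hy'⟩
    · rw [hτW x hx, hτW y hy] at hxy
      exact congrArg Subtype.val (e1.injective (Subtype.ext hxy))
    · exact absurd (by rwa [hxy] at hx') (Finset.mem_sdiff.1 hy').2
    · exact absurd (hU.1 (by rwa [hxy, hy'] at hx')) hy
    · exact absurd (by rwa [← hxy] at hy') (Finset.mem_sdiff.1 hx').2
    · rw [hτDW x hx, hτDW y hy] at hxy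
      exact congrArg Subtype.val (e2.injective (Subtype.ext hxy))
    · exact absurd (Finset.mem_sdiff.1 (by rwa [hxy, hy'] at hx' : y ∈ D \ U)).1 hy
    · exact absurd (hU.1 (by rwa [← hxy, hx'] at hy' : x ∈ U)) hx
    · exact absurd (Finset.mem_sdiff.1 (by rwa [← hxy, hx'] at hy' : x ∈ D \ U)).1 hx
    · rw [hx', hy'] at hxy; exact hxy
  let τ : Equiv.Perm (Fin n) := Equiv.ofBijective τf (Finite.injective_iff_bijective.mp hinj)
  apply Finset.card_le_card_of_injOn (fun g => τ.trans g)
  · intro g hg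
    simp only [cutPerms, mem_coe, mem_filter, mem_univ, true_and] at hg ⊢
    intro x hx y hy
    have h1 : τ x ∈ U := by
      show τf x ∈ U
      rw [hτW x hx]; exact (e1 ⟨x, hx⟩).2
    have h2 : τ y ∈ D \ U := by
      show τf y ∈ D \ U
      rw [hτDW y hy]; exact (e2 ⟨y, hy⟩).2
    exact hg (τ x) h1 (τ y) h2
  · intro g _ g' _ h
    apply Equiv.ext
    intro x
    have := congrArg (fun f : Equiv.Perm (Fin n) => f (τ.symm x)) h
    simpa using this

lemma factorial_le_cut (S T : Finset (Fin n)) :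
    n.factorial ≤ (S ∪ T).card.choose S.card * (cutPerms (S ∪ T) S).card := by
  classical
  set D := S ∪ T with hD
  set a := S.card with ha
  have haD : a ≤ D.card := Finset.card_le_card Finset.subset_union_left
  have hSmem : S ∈ D.powersetCard a := Finset.mem_powersetCard.2 ⟨Finset.subset_union_left, rfl⟩
  have hcover : (Finset.univ : Finset (Equiv.Perm (Fin n))) ⊆
      (D.powersetCard a).biUnion (fun U => cutPerms D U) := by
    intro g _
    obtain ⟨U, hU, hgU⟩ := exists_cut D a haD g
    exact Finset.mem_biUnion.2 ⟨U, hU, hgU⟩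
  have hcard : ((D.powersetCard a).biUnion (fun U => cutPerms D U)).card =
      ∑ U ∈ D.powersetCard a, (cutPerms D U).card := by
    apply Finset.card_biUnion
    intro U hU U' hU' hne
    exact cut_disjoint hU hU' hne
  calc n.factorial = Fintype.card (Equiv.Perm (Fin n)) := by
        rw [Fintype.card_perm, Fintype.card_fin]
    _ = (Finset.univ : Finset (Equiv.Perm (Fin n))).card := rfl
    _ ≤ ((D.powersetCard a).biUnion (fun U => cutPerms D U)).card :=
        Finset.card_le_card hcover
    _ = ∑ U ∈ D.powersetCard a, (cutPerms D U).card := hcard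
    _ ≤ ∑ U ∈ D.powersetCard a, (cutPerms D S).card :=
        Finset.sum_le_sum (fun U hU => cut_card_le hU hSmem)
    _ = D.card.choose a * (cutPerms D S).card := by
        rw [Finset.sum_const, Finset.card_powersetCard, smul_eq_mul]

lemma mem_cutPerms {n : ℕ} {D U : Finset (Fin n)} {g : Equiv.Perm (Fin n)} :
    g ∈ cutPerms D U ↔ ∀ x ∈ U, ∀ y ∈ D \ U, g x < g y := by
  simp [cutPerms]

lemma cutPerms_disjoint_of_cross {n : ℕ} {S T S' T' : Finset (Fin n)}
    (hd : Disjoint S T) (hd' : Disjoint S' T')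
    (h1 : ∃ x, x ∈ S ∧ x ∈ T') (h2 : ∃ y, y ∈ S' ∧ y ∈ T) :
    Disjoint (cutPerms (S ∪ T) S) (cutPerms (S' ∪ T') S') := by
  obtain ⟨x, hxS, hxT'⟩ := h1
  obtain ⟨y, hyS', hyT⟩ := h2
  rw [Finset.disjoint_left]
  intro g hg hg'
  rw [mem_cutPerms] at hg hg'
  have e1 : (S ∪ T) \ S = T := Finset.union_sdiff_cancel_left hd
  have e2 : (S' ∪ T') \ S' = T' := Finset.union_sdiff_cancel_left hd'
  have l1 : g x < g y := hg x hxS y (by rw [e1]; exact hyT)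
  have l2 : g y < g x := hg' y hyS' x (by rw [e2]; exact hxT')
  omega
def Aset (r j : ℕ) : Finset (Fin r) := Finset.univ.filter (fun x => (x : ℕ) ≤ j)
def Bset (r j : ℕ) : Finset (Fin r) := Finset.univ.filter (fun x => r - 1 - j ≤ (x : ℕ))

lemma Aset_ntriv {r : ℕ} (hr : 3 ≤ r) {j : ℕ} (hj : j ≤ r - 2) :
    (Aset r j).Nonempty ∧ Aset r j ≠ Finset.univ := by
  constructor
  · exact ⟨⟨0, by omega⟩, Finset.mem_filter.2 ⟨Finset.mem_univ _, by show (0:ℕ) ≤ j; omega⟩⟩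
  · intro h
    have : (⟨r - 1, by omega⟩ : Fin r) ∈ Aset r j := h ▸ Finset.mem_univ _
    have := (Finset.mem_filter.1 this).2
    simp only [Fin.val_mk] at this
    omega

lemma Bset_ntriv {r : ℕ} (hr : 3 ≤ r) {j : ℕ} (hj : j ≤ r - 2) :
    (Bset r j).Nonempty ∧ Bset r j ≠ Finset.univ := by
  constructor
  · exact ⟨⟨r - 1, by omega⟩, Finset.mem_filter.2 ⟨Finset.mem_univ _,
      by show r - 1 - j ≤ r - 1; omega⟩⟩
  · intro h
    have : (⟨0, by omega⟩ : Fin r) ∈ Bset r j := h ▸ Finset.mem_univ _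
    have := (Finset.mem_filter.1 this).2
    simp only [Fin.val_mk] at this
    omega

lemma Aset_mono {r j j' : ℕ} (h : j ≤ j') : Aset r j ⊆ Aset r j' := by
  intro x hx
  have := (Finset.mem_filter.1 hx).2
  exact Finset.mem_filter.2 ⟨Finset.mem_univ _, by omega⟩

lemma Bset_mono {r j j' : ℕ} (h : j ≤ j') : Bset r j ⊆ Bset r j' := by
  intro x hx
  have := (Finset.mem_filter.1 hx).2
  exact Finset.mem_filter.2 ⟨Finset.mem_univ _, by omega⟩

lemma Aset_not_sub {r : ℕ} (hr : 3 ≤ r) {j : ℕ} (hj : j + 1 ≤ r - 2) :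
    ¬ Aset r (j + 1) ⊆ Aset r j := by
  intro h
  have h1 : (⟨j + 1, by omega⟩ : Fin r) ∈ Aset r (j + 1) :=
    Finset.mem_filter.2 ⟨Finset.mem_univ _, by show j + 1 ≤ j + 1; omega⟩
  have := (Finset.mem_filter.1 (h h1)).2
  simp only [Fin.val_mk] at this
  omega

lemma Bset_not_sub {r : ℕ} (hr : 3 ≤ r) {j : ℕ} (hj : j + 1 ≤ r - 2) :
    ¬ Bset r (j + 1) ⊆ Bset r j := by
  intro h
  have h1 : (⟨r - 1 - (j + 1), by omega⟩ : Fin r) ∈ Bset r (j + 1) :=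
    Finset.mem_filter.2 ⟨Finset.mem_univ _, by show r - 1 - (j+1) ≤ r - 1 - (j+1); omega⟩
  have := (Finset.mem_filter.1 (h h1)).2
  simp only [Fin.val_mk] at this
  omega

lemma zero_mem_Aset {r : ℕ} (hr : 3 ≤ r) (j : ℕ) : (⟨0, by omega⟩ : Fin r) ∈ Aset r j :=
  Finset.mem_filter.2 ⟨Finset.mem_univ _, by show (0:ℕ) ≤ j; omega⟩

lemma zero_not_mem_Bset {r : ℕ} (hr : 3 ≤ r) {j : ℕ} (hj : j ≤ r - 2) :
    (⟨0, by omega⟩ : Fin r) ∉ Bset r j := by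
  intro h
  have := (Finset.mem_filter.1 h).2
  simp only [Fin.val_mk] at this
  omega

lemma last_mem_Bset {r : ℕ} (hr : 3 ≤ r) (j : ℕ) : (⟨r - 1, by omega⟩ : Fin r) ∈ Bset r j :=
  Finset.mem_filter.2 ⟨Finset.mem_univ _, by show r - 1 - j ≤ r - 1; omega⟩

lemma last_not_mem_Aset {r : ℕ} (hr : 3 ≤ r) {j : ℕ} (hj : j ≤ r - 2) :
    (⟨r - 1, by omega⟩ : Fin r) ∉ Aset r j := by
  intro h
  have := (Finset.mem_filter.1 h).2
  simp only [Fin.val_mk] at this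
  omega

/-- For `r ≥ 3` and `n ≥ r`, the number of pairwise unrelated copies of `FSP(r,0,r)` in
the powerset of `[n]` is at most `⌊C(n+2−r, ⌊(n+2−r)/2⌋)/2⌋`. -/
theorem stmt_11 (r n : ℕ) (hr : 3 ≤ r) (hn : r ≤ n) (k : ℕ)
    (e : Fin k → NTS r → Finset (Fin n))
    (hcopy : ∀ i, IsNTSCopy r n (e i))
    (hunrel : ∀ i j, i ≠ j → ∀ J K : NTS r, ¬ e i J ⊆ e j K) :
    k ≤ Nat.choose (n + 2 - r) ((n + 2 - r) / 2) / 2 := by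
  classical
  set M := n + 2 - r with hMdef
  set N := Nat.choose M (M / 2) with hNdef
  let AJ : ℕ → NTS r := fun j => ⟨Aset r (min j (r - 2)), Aset_ntriv hr (min_le_right _ _)⟩
  let BJ : ℕ → NTS r := fun j => ⟨Bset r (min j (r - 2)), Bset_ntriv hr (min_le_right _ _)⟩
  let X : Fin k × Bool → Finset (Fin n) := fun t => cond t.2 (e t.1 (BJ 0)) (e t.1 (AJ 0))
  let Y : Fin k × Bool → Finset (Fin n) :=
    fun t => cond t.2 (e t.1 (BJ (r - 2))) (e t.1 (AJ (r - 2)))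
  let T : Fin k × Bool → Finset (Fin n) := fun t => Finset.univ \ Y t
  have hXY : ∀ t, X t ⊆ Y t := by
    rintro ⟨i, b⟩
    cases b
    · show e i (AJ 0) ⊆ e i (AJ (r - 2))
      refine (hcopy i _ _).1 ?_
      show Aset r (min 0 (r - 2)) ⊆ Aset r (min (r - 2) (r - 2))
      exact Aset_mono (by omega)
    · show e i (BJ 0) ⊆ e i (BJ (r - 2))
      refine (hcopy i _ _).1 ?_
      show Bset r (min 0 (r - 2)) ⊆ Bset r (min (r - 2) (r - 2))
      exact Bset_mono (by omega)
  have hdisj : ∀ t, Disjoint (X t) (T t) := by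
    intro t
    rw [Finset.disjoint_left]
    intro x hx hxT
    exact (Finset.mem_sdiff.1 hxT).2 (hXY t hx)
  have grow : ∀ (i : Fin k) (b : Bool), ∀ j, j ≤ r - 2 →
      (X (i, b)).card + j ≤ (cond b (e i (BJ j)) (e i (AJ j))).card := by
    intro i b j
    induction j with
    | zero =>
      intro _
      show (X (i, b)).card + 0 ≤ (X (i, b)).card
      omega
    | succ j ih =>
      intro hj
      have h1 := ih (by omega)
      have hmj : min j (r - 2) = j := by omega
      have hmj1 : min (j + 1) (r - 2) = j + 1 := by omega
      have hcard : (cond b (e i (BJ j)) (e i (AJ j))).card <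
          (cond b (e i (BJ (j + 1))) (e i (AJ (j + 1)))).card := by
        apply Finset.card_lt_card
        rw [Finset.ssubset_def]
        cases b
        · constructor
          · refine (hcopy i _ _).1 ?_
            show Aset r (min j (r - 2)) ⊆ Aset r (min (j + 1) (r - 2))
            exact Aset_mono (by omega)
          · intro hcon
            have h2 := (hcopy i (AJ (j + 1)) (AJ j)).2 hcon
            have h3 : Aset r (min (j + 1) (r - 2)) ⊆ Aset r (min j (r - 2)) := h2
            rw [hmj, hmj1] at h3
            exact Aset_not_sub hr (by omega) h3
        · constructor
          · refine (hcopy i _ _).1 ?_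
            show Bset r (min j (r - 2)) ⊆ Bset r (min (j + 1) (r - 2))
            exact Bset_mono (by omega)
          · intro hcon
            have h2 := (hcopy i (BJ (j + 1)) (BJ j)).2 hcon
            have h3 : Bset r (min (j + 1) (r - 2)) ⊆ Bset r (min j (r - 2)) := h2
            rw [hmj, hmj1] at h3
            exact Bset_not_sub hr (by omega) h3
      omega
  have hYcard : ∀ t, (X t).card + (r - 2) ≤ (Y t).card := by
    rintro ⟨i, b⟩
    exact grow i b (r - 2) le_rfl
  have hMcard : ∀ t, (X t ∪ T t).card ≤ M := by
    intro t
    rw [Finset.card_union_of_disjoint (hdisj t)]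
    have h1 : (T t).card = n - (Y t).card := by
      show (Finset.univ \ Y t).card = n - (Y t).card
      rw [Finset.card_sdiff_of_subset (Finset.subset_univ _), Finset.card_univ, Fintype.card_fin]
    have h2 : (Y t).card ≤ n := by
      calc (Y t).card ≤ (Finset.univ : Finset (Fin n)).card := Finset.card_le_univ _
        _ = n := by rw [Finset.card_univ, Fintype.card_fin]
    have h3 := hYcard t
    omega
  have hcross : ∀ t t', t ≠ t' → ∃ x, x ∈ X t ∧ x ∈ T t' := by
    rintro ⟨i, b⟩ ⟨i', b'⟩ hne
    have hnsub : ¬ X (i, b) ⊆ Y (i', b') := by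
      by_cases hii : i = i'
      · subst hii
        have hbb : b ≠ b' := fun h => hne (by rw [h])
        cases b <;> cases b'
        · exact absurd rfl hbb
        · intro h
          have h2 := (hcopy i (AJ 0) (BJ (r - 2))).2 h
          have h3 : Aset r (min 0 (r - 2)) ⊆ Bset r (min (r - 2) (r - 2)) := h2
          exact zero_not_mem_Bset hr (min_le_right _ _) (h3 (zero_mem_Aset hr _))
        · intro h
          have h2 := (hcopy i (BJ 0) (AJ (r - 2))).2 h
          have h3 : Bset r (min 0 (r - 2)) ⊆ Aset r (min (r - 2) (r - 2)) := h2
          exact last_not_mem_Aset hr (min_le_right _ _) (h3 (last_mem_Bset hr _))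
        · exact absurd rfl hbb
      · cases b <;> cases b' <;> exact hunrel i i' hii _ _
    obtain ⟨x, hx1, hx2⟩ := Finset.not_subset.1 hnsub
    exact ⟨x, hx1, Finset.mem_sdiff.2 ⟨Finset.mem_univ _, hx2⟩⟩
  have hbound : ∀ t, Nat.factorial n ≤ N * (cutPerms (X t ∪ T t) (X t)).card := by
    intro t
    have h1 := factorial_le_cut (X t) (T t)
    have h2 : (X t ∪ T t).card.choose (X t).card ≤ N := by
      calc (X t ∪ T t).card.choose (X t).card ≤ M.choose (X t).card :=
            Nat.choose_le_choose _ (hMcard t)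
        _ ≤ M.choose (M / 2) := Nat.choose_le_middle _ _
    calc Nat.factorial n
        ≤ (X t ∪ T t).card.choose (X t).card * (cutPerms (X t ∪ T t) (X t)).card := h1
      _ ≤ N * (cutPerms (X t ∪ T t) (X t)).card := Nat.mul_le_mul_right _ h2
  have hpair : ∀ t ∈ (Finset.univ : Finset (Fin k × Bool)), ∀ t' ∈ Finset.univ, t ≠ t' →
      Disjoint (cutPerms (X t ∪ T t) (X t)) (cutPerms (X t' ∪ T t') (X t')) := by
    intro t _ t' _ hne
    exact cutPerms_disjoint_of_cross (hdisj t) (hdisj t')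
      (hcross t t' hne) (hcross t' t (Ne.symm hne))
  have hsum : ∑ t : Fin k × Bool, (cutPerms (X t ∪ T t) (X t)).card ≤ Nat.factorial n := by
    rw [← Finset.card_biUnion hpair]
    calc ((Finset.univ : Finset (Fin k × Bool)).biUnion
          (fun t => cutPerms (X t ∪ T t) (X t))).card
        ≤ (Finset.univ : Finset (Equiv.Perm (Fin n))).card :=
          Finset.card_le_card (Finset.subset_univ _)
      _ = Nat.factorial n := by
          rw [Finset.card_univ, Fintype.card_perm, Fintype.card_fin]
  have hmain : (k * 2) * Nat.factorial n ≤ N * Nat.factorial n := by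
    calc (k * 2) * Nat.factorial n = ∑ _t : Fin k × Bool, Nat.factorial n := by
          rw [Finset.sum_const, Finset.card_univ, Fintype.card_prod, Fintype.card_fin,
            Fintype.card_bool, smul_eq_mul]
      _ ≤ ∑ t : Fin k × Bool, N * (cutPerms (X t ∪ T t) (X t)).card :=
          Finset.sum_le_sum (fun t _ => hbound t)
      _ = N * ∑ t : Fin k × Bool, (cutPerms (X t ∪ T t) (X t)).card := by
          rw [Finset.mul_sum]
      _ ≤ N * Nat.factorial n := Nat.mul_le_mul_left _ hsum
  have hk2 : k * 2 ≤ N := Nat.le_of_mul_le_mul_right hmain (Nat.factorial_pos n)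
  exact (Nat.le_div_iff_mul_le (by norm_num)).2 hk2
end

section
/- Let n be a multiple of r ≥ 3 or more generally n ≥ r, let q = ⌊n/r⌋, and partition part of an n-element set M into pairwise disjoint r-element blocks M₀,…,M_{q−1} with remainder M_q. Fix 0 ≤ a < b ≤ r with a+2 ≤ b and h ∈ ℕ. Call (i,B) with i ∈ {0,…,q−1} and B ⊆ M a fundamental pair if |B| = h, B ∩ M_i = ∅, and for every j < i the set B ∩ M_j has size ≤ a or ≥ b. For a fundamental pair (i,B) let U(i,B) = {B ∪ X : X ⊆ M_i, a < |X| < b}. Then for distinct fundamental pairs (i,B) ≠ (i′,B′), every member of U(i,B) is ⊆-incomparable with every member of U(i′,B′). -/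
open Finset

lemma stmt_12_key {n : ℕ} (M : ℕ → Finset (Fin n)) (a b h : ℕ)
    (i i' : ℕ) (B B' X X' : Finset (Fin n))
    (hBcard : B.card = h) (hB'card : B'.card = h)
    (hBi : B ∩ M i = ∅) (hB'i' : B' ∩ M i' = ∅)
    (hext : (B' ∩ M i).card ≤ a ∨ b ≤ (B' ∩ M i).card)
    (hMdisj : Disjoint (M i) (M i'))
    (hX : X ⊆ M i) (hX1 : a < X.card) (hX2 : X.card < b)
    (hX' : X' ⊆ M i') (hX1' : a < X'.card) (hX2' : X'.card < b) :
    ¬ B ∪ X ⊆ B' ∪ X' ∧ ¬ B' ∪ X' ⊆ B ∪ X := by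
  have hBnotMi : ∀ x, x ∈ B → x ∉ M i := by
    intro x hx hmx
    have : x ∈ B ∩ M i := mem_inter.2 ⟨hx, hmx⟩
    simp [hBi] at this
  have hB'notMi' : ∀ x, x ∈ B' → x ∉ M i' := by
    intro x hx hmx
    have : x ∈ B' ∩ M i' := mem_inter.2 ⟨hx, hmx⟩
    simp [hB'i'] at this
  have hXX' : Disjoint X X' := hMdisj.mono hX hX'
  constructor
  · intro hsub
    -- X ⊆ B'
    have hXB' : X ⊆ B' := by
      intro x hx
      have hx2 : x ∈ B' ∪ X' := hsub (mem_union_right _ hx)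
      rcases mem_union.1 hx2 with h1 | h1
      · exact h1
      · exact absurd h1 (Finset.disjoint_left.1 hXX' hx)
    have hXint : X ⊆ B' ∩ M i := subset_inter hXB' hX
    have hb : b ≤ (B' ∩ M i).card := by
      rcases hext with h1 | h1
      · have := card_le_card hXint; omega
      · exact h1
    have hBsub : B ⊆ (B' \ M i) ∪ X' := by
      intro x hx
      have hx2 : x ∈ B' ∪ X' := hsub (mem_union_left _ hx)
      rcases mem_union.1 hx2 with h1 | h1
      · exact mem_union_left _ (mem_sdiff.2 ⟨h1, hBnotMi x hx⟩)
      · exact mem_union_right _ h1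
    have h1 : B.card ≤ (B' \ M i).card + X'.card :=
      (card_le_card hBsub).trans (card_union_le _ _)
    have h2 : (B' \ M i).card + (B' ∩ M i).card = B'.card :=
      Finset.card_sdiff_add_card_inter _ _
    omega
  · intro hsub
    have h1 : B' ∩ M i ⊆ X := by
      intro x hx
      rcases mem_inter.1 hx with ⟨hxB', hxMi⟩
      have hx2 : x ∈ B ∪ X := hsub (mem_union_left _ hxB')
      rcases mem_union.1 hx2 with h1 | h1
      · exact absurd hxMi (hBnotMi x h1)
      · exact h1
    have ha : (B' ∩ M i).card ≤ a := by
      rcases hext with h2 | h2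
      · exact h2
      · have := card_le_card h1; omega
    have hX'B : X' ⊆ B := by
      intro x hx
      have hx2 : x ∈ B ∪ X := hsub (mem_union_right _ hx)
      rcases mem_union.1 hx2 with h2 | h2
      · exact h2
      · exact absurd h2 (Finset.disjoint_right.1 hXX' hx)
    have hB'sub : B' ⊆ (B \ X') ∪ (B' ∩ M i) := by
      intro x hx
      have hx2 : x ∈ B ∪ X := hsub (mem_union_left _ hx)
      rcases mem_union.1 hx2 with h2 | h2
      · refine mem_union_left _ (mem_sdiff.2 ⟨h2, fun hxX' => ?_⟩)
        exact hB'notMi' x hx (hX' hxX')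
      · exact mem_union_right _ (mem_inter.2 ⟨hx, hX h2⟩)
    have h2 : B'.card ≤ (B \ X').card + (B' ∩ M i).card :=
      (card_le_card hB'sub).trans (card_union_le _ _)
    have h3 : (B \ X').card + X'.card = B.card :=
      Finset.card_sdiff_add_card_eq_card hX'B
    omega

/-- The fundamental-pair construction produces pairwise unrelated families:
members coming from distinct fundamental pairs are incomparable under inclusion. -/
theorem stmt_12 (n r q a b h : ℕ) (hr : 3 ≤ r) (hn : r ≤ n) (hq : q = n / r)
    (M : ℕ → Finset (Fin n))
    (hcard : ∀ i < q, (M i).card = r)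
    (hdisj : ∀ i ≤ q, ∀ j ≤ q, i ≠ j → Disjoint (M i) (M j))
    (hrem : M q = Finset.univ \ (Finset.range q).biUnion M)
    (hab1 : a < b) (hab2 : a + 2 ≤ b) (hbr : b ≤ r)
    (i i' : ℕ) (B B' : Finset (Fin n))
    (hfp : i < q ∧ B.card = h ∧ B ∩ M i = ∅ ∧
      ∀ j < i, (B ∩ M j).card ≤ a ∨ b ≤ (B ∩ M j).card)
    (hfp' : i' < q ∧ B'.card = h ∧ B' ∩ M i' = ∅ ∧
      ∀ j < i', (B' ∩ M j).card ≤ a ∨ b ≤ (B' ∩ M j).card)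
    (hne : (i, B) ≠ (i', B'))
    (X X' : Finset (Fin n))
    (hX : X ⊆ M i) (hX1 : a < X.card) (hX2 : X.card < b)
    (hX' : X' ⊆ M i') (hX1' : a < X'.card) (hX2' : X'.card < b) :
    ¬ B ∪ X ⊆ B' ∪ X' ∧ ¬ B' ∪ X' ⊆ B ∪ X := by
  obtain ⟨hiq, hBcard, hBi, hBext⟩ := hfp
  obtain ⟨hi'q, hB'card, hB'i', hB'ext⟩ := hfp'
  rcases lt_trichotomy i i' with hlt | heq | hgt
  · exact stmt_12_key M a b h i i' B B' X X' hBcard hB'card hBi hB'i'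
      (hB'ext i hlt) (hdisj i hiq.le i' hi'q.le hlt.ne) hX hX1 hX2 hX' hX1' hX2'
  · subst heq
    have hBB' : B ≠ B' := by
      intro h; exact hne (by simp [h])
    constructor
    · intro hsub
      have hBsub : B ⊆ B' := by
        intro x hx
        rcases mem_union.1 (hsub (mem_union_left _ hx)) with h1 | h1
        · exact h1
        · exfalso
          have : x ∈ B ∩ M i := mem_inter.2 ⟨hx, hX' h1⟩
          simp [hBi] at this
      exact hBB' (Finset.eq_of_subset_of_card_le hBsub (by omega))
    · intro hsub
      have hBsub : B' ⊆ B := by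
        intro x hx
        rcases mem_union.1 (hsub (mem_union_left _ hx)) with h1 | h1
        · exact h1
        · exfalso
          have : x ∈ B' ∩ M i := mem_inter.2 ⟨hx, hX h1⟩
          simp [hB'i'] at this
      exact hBB' (Finset.eq_of_subset_of_card_le hBsub (by omega)).symm
  · have := stmt_12_key M a b h i' i B' B X' X hB'card hBcard hB'i' hBi
      (hBext i' hgt) (hdisj i' hi'q.le i hiq.le hgt.ne) hX' hX1' hX2' hX hX1 hX2
    exact ⟨this.2, this.1⟩
end

section
/- For n ≥ 2, Sp(U, n) = ⌊C(n, ⌊n/2⌋)/2⌋ where U is the two-element antichain; equivalently, the maximum number of pairwise unrelated copies of a 2-element antichain in the powerset of [n] equals ⌊C(n,⌊n/2⌋)/2⌋. -/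
/-- For `n ≥ 2`, the maximum number of pairwise unrelated copies of the two-element
antichain in the powerset of `[n]` equals `⌊C(n, ⌊n/2⌋)/2⌋`: no family of pairwise
unrelated copies can be larger, and a family of that size exists. -/
theorem stmt_15 (n : ℕ) (hn : 2 ≤ n) :
    (∀ k : ℕ, ∀ P Q : Fin k → Finset (Fin n),
        (∀ i, ¬ P i ⊆ Q i ∧ ¬ Q i ⊆ P i) →
        (∀ i j, i ≠ j →
          ∀ s ∈ ({P i, Q i} : Finset (Finset (Fin n))),
            ∀ t ∈ ({P j, Q j} : Finset (Finset (Fin n))), ¬ s ⊆ t ∧ ¬ t ⊆ s) →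
        k ≤ Nat.choose n (n / 2) / 2) ∧
    (∃ P Q : Fin (Nat.choose n (n / 2) / 2) → Finset (Fin n),
        (∀ i, ¬ P i ⊆ Q i ∧ ¬ Q i ⊆ P i) ∧
        (∀ i j, i ≠ j →
          ∀ s ∈ ({P i, Q i} : Finset (Finset (Fin n))),
            ∀ t ∈ ({P j, Q j} : Finset (Finset (Fin n))), ¬ s ⊆ t ∧ ¬ t ⊆ s)) := by
  constructor
  · -- upper bound
    intro k P Q hpq hcross
    have hmemP : ∀ i : Fin k, P i ∈ ({P i, Q i} : Finset (Finset (Fin n))) := by simp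
    have hmemQ : ∀ i : Fin k, Q i ∈ ({P i, Q i} : Finset (Finset (Fin n))) := by simp
    set f : Fin k ⊕ Fin k → Finset (Fin n) := Sum.elim P Q with hf
    have hinj : Function.Injective f := by
      rintro (i|i) (j|j) h <;> simp only [hf, Sum.elim_inl, Sum.elim_inr] at h
      · rcases eq_or_ne i j with rfl | hij
        · rfl
        · exact absurd (h ▸ subset_rfl) (hcross i j hij _ (hmemP i) _ (hmemP j)).1
      · rcases eq_or_ne i j with rfl | hij
        · exact absurd (h ▸ subset_rfl) (hpq i).1
        · exact absurd (h ▸ subset_rfl) (hcross i j hij _ (hmemP i) _ (hmemQ j)).1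
      · rcases eq_or_ne i j with rfl | hij
        · exact absurd (h ▸ subset_rfl) (hpq i).2
        · exact absurd (h ▸ subset_rfl) (hcross i j hij _ (hmemQ i) _ (hmemP j)).1
      · rcases eq_or_ne i j with rfl | hij
        · rfl
        · exact absurd (h ▸ subset_rfl) (hcross i j hij _ (hmemQ i) _ (hmemQ j)).1
    set 𝒜 : Finset (Finset (Fin n)) := Finset.univ.image f with h𝒜
    have hcard : 𝒜.card = 2 * k := by
      rw [h𝒜, Finset.card_image_of_injective _ hinj]
      simp [two_mul]
    have hanti : IsAntichain (· ⊆ ·) (𝒜 : Set (Finset (Fin n))) := by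
      intro s hs t ht hst hsub
      simp only [h𝒜, Finset.coe_image, Set.mem_image, Finset.coe_univ, Set.image_univ,
        Set.mem_range] at hs ht
      obtain ⟨a, rfl⟩ := hs
      obtain ⟨b, rfl⟩ := ht
      rcases a with i | i <;> rcases b with j | j <;>
        simp only [hf, Sum.elim_inl, Sum.elim_inr] at hsub hst ⊢
      · rcases eq_or_ne i j with rfl | hij
        · exact hst rfl
        · exact (hcross i j hij _ (hmemP i) _ (hmemP j)).1 hsub
      · rcases eq_or_ne i j with rfl | hij
        · exact (hpq i).1 hsub
        · exact (hcross i j hij _ (hmemP i) _ (hmemQ j)).1 hsub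
      · rcases eq_or_ne i j with rfl | hij
        · exact (hpq i).2 hsub
        · exact (hcross i j hij _ (hmemQ i) _ (hmemP j)).1 hsub
      · rcases eq_or_ne i j with rfl | hij
        · exact hst rfl
        · exact (hcross i j hij _ (hmemQ i) _ (hmemQ j)).1 hsub
    have hsp := IsAntichain.sperner hanti
    rw [hcard] at hsp
    simp only [Fintype.card_fin] at hsp
    omega
  · -- construction
    set m := Nat.choose n (n / 2) with hm
    set S : Finset (Finset (Fin n)) :=
      Finset.powersetCard (n / 2) (Finset.univ : Finset (Fin n)) with hSdef
    have hS : S.card = m := by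
      simp [hSdef, hm, Finset.card_powersetCard]
    have hcardS : ∀ s ∈ S, s.card = n / 2 := by
      intro s hs
      exact (Finset.mem_powersetCard.mp hs).2
    have hincomp : ∀ s t, s ∈ S → t ∈ S → s ≠ t → ¬ s ⊆ t := by
      intro s t hs ht hne hsub
      exact hne (Finset.eq_of_subset_of_card_le hsub
        (by rw [hcardS s hs, hcardS t ht]))
    let e : Fin S.card ≃ S := S.equivFin.symm
    have hb1 : ∀ i : Fin (m / 2), 2 * (i : ℕ) < S.card := by
      intro i; rw [hS]; omega
    have hb2 : ∀ i : Fin (m / 2), 2 * (i : ℕ) + 1 < S.card := by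
      intro i; rw [hS]; omega
    refine ⟨fun i => (e ⟨2 * i, hb1 i⟩ : S), fun i => (e ⟨2 * i + 1, hb2 i⟩ : S), ?_, ?_⟩
    · intro i
      have hne : ((e ⟨2 * i, hb1 i⟩ : S) : Finset (Fin n)) ≠ (e ⟨2 * i + 1, hb2 i⟩ : S) := by
        intro h
        have := e.injective (Subtype.ext h)
        simp only [Fin.mk.injEq] at this
        omega
      exact ⟨hincomp _ _ (e _).2 (e _).2 hne, hincomp _ _ (e _).2 (e _).2 hne.symm⟩
    · intro i j hij s hs t ht
      simp only [Finset.mem_insert, Finset.mem_singleton] at hs ht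
      have key : ∀ (a b : Fin S.card), (a : ℕ) ≠ (b : ℕ) →
          ¬ ((e a : S) : Finset (Fin n)) ⊆ (e b : S) := by
        intro a b hab
        refine hincomp _ _ (e a).2 (e b).2 ?_
        intro h
        exact hab (Fin.val_eq_val a b |>.mpr (e.injective (Subtype.ext h)))
      have hij' : (i : ℕ) ≠ (j : ℕ) := fun h => hij (Fin.ext h)
      rcases hs with rfl | rfl <;> rcases ht with rfl | rfl <;>
        exact ⟨key _ _ (by simp; omega), key _ _ (by simp; omega)⟩
end

section
/- For r ≥ 3, p ∈ ℤ, and n ≥ r, the quantity f_p(n) := Σ_{i=0}^{⌊n/r⌋−1} Σ_{j=0}^{i} C(i,j) · C(n−(i+1)r, p+⌊(n−r)/2⌋−jr) is a lower bound for Sp(FSP(r,0,r), n), the maximum number of pairwise unrelated copies of the poset of nonempty proper subsets of [r] in the powerset of [n]. -/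
/-- Binomial coefficient `C(m, k)` with an integer lower index, following the convention
that it is `0` unless `0 ≤ k ≤ m` (`Nat.choose` already vanishes when `k > m`). -/
def zbc (m : ℕ) (k : ℤ) : ℕ := if 0 ≤ k then m.choose k.toNat else 0

/-- `f_p(n) = Σ_{i=0}^{⌊n/r⌋−1} Σ_{j=0}^{i} C(i,j)·C(n−(i+1)r, p+⌊(n−r)/2⌋−jr)`. -/
def fp (r : ℕ) (p : ℤ) (n : ℕ) : ℕ :=
  ∑ i ∈ Finset.range (n / r), ∑ j ∈ Finset.range (i + 1),
    i.choose j * zbc (n - (i + 1) * r) (p + (((n - r) / 2 : ℕ) : ℤ) - ((j * r : ℕ) : ℤ))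

namespace Stmt19

lemma sm (k r : ℕ) : (k + 1) * r = k * r + r := by ring

lemma blk_unique {r k k' x : ℕ} (hr : 0 < r) (h1 : k * r ≤ x) (h2 : x < (k + 1) * r)
    (h3 : k' * r ≤ x) (h4 : x < (k' + 1) * r) : k = k' := by
  have e1 : x / r = k := Nat.div_eq_of_lt_le h1 h2
  have e2 : x / r = k' := Nat.div_eq_of_lt_le h3 h4
  omega

variable (r n : ℕ)

def Bnat (i : ℕ) (S : Finset (Fin i)) (T : Finset (Fin (n - (i + 1) * r))) : Finset ℕ :=
  (S.biUnion fun k => (Finset.range r).image fun a => k.val * r + a)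
    ∪ T.image fun t => (i + 1) * r + t.val

lemma mem_Bnat {i : ℕ} {S : Finset (Fin i)} {T : Finset (Fin (n - (i + 1) * r))} {x : ℕ} :
    x ∈ Bnat r n i S T ↔
      (∃ k ∈ S, k.val * r ≤ x ∧ x < (k.val + 1) * r) ∨ ∃ t ∈ T, x = (i + 1) * r + t.val := by
  simp only [Bnat, Finset.mem_union, Finset.mem_biUnion, Finset.mem_image, Finset.mem_range]
  constructor
  · rintro (⟨k, hk, a, ha, rfl⟩ | ⟨t, ht, rfl⟩)
    · exact Or.inl ⟨k, hk, by rw [sm]; omega⟩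
    · exact Or.inr ⟨t, ht, rfl⟩
  · rintro (⟨k, hk, h1, h2⟩ | ⟨t, ht, rfl⟩)
    · exact Or.inl ⟨k, hk, x - k.val * r, by rw [sm] at h2; omega⟩
    · exact Or.inr ⟨t, ht, rfl⟩

lemma card_Bnat {i : ℕ} (hr : 0 < r) (S : Finset (Fin i)) (T : Finset (Fin (n - (i + 1) * r))) :
    (Bnat r n i S T).card = S.card * r + T.card := by
  rw [Bnat, Finset.card_union_of_disjoint, Finset.card_biUnion, Finset.card_image_of_injective]
  · have : ∀ k ∈ S, ((Finset.range r).image fun a => k.val * r + a).card = r := by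
      intro k _
      rw [Finset.card_image_of_injective _ (fun a b h => by omega), Finset.card_range]
    rw [Finset.sum_congr rfl this, Finset.sum_const, smul_eq_mul]
  · intro a b h
    simp only [add_right_inj] at h
    exact Fin.ext h
  · intro k _ k' _ hkk'
    refine Finset.disjoint_left.mpr ?_
    rintro x hx hx'
    simp only [Finset.mem_image, Finset.mem_range] at hx hx'
    obtain ⟨a, ha, rfl⟩ := hx
    obtain ⟨b, hb, he⟩ := hx'
    have : k.val = k'.val := blk_unique (x := k.val * r + a) hr (Nat.le_add_right _ _)
      (by rw [sm]; omega) (by omega) (by rw [sm]; omega)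
    exact hkk' (Fin.ext this)
  · refine Finset.disjoint_left.mpr ?_
    rintro x hx hx'
    simp only [Finset.mem_biUnion, Finset.mem_image, Finset.mem_range] at hx hx'
    obtain ⟨k, hk, a, ha, rfl⟩ := hx
    obtain ⟨t, ht, he⟩ := hx'
    have hki : (k.val + 1) * r ≤ i * r := Nat.mul_le_mul_right r k.isLt
    have : i * r ≤ (i + 1) * r := Nat.mul_le_mul_right r (by omega)
    rw [sm] at hki
    omega

lemma Bnat_lt {i : ℕ} (hi : (i + 1) * r ≤ n) (S : Finset (Fin i))
    (T : Finset (Fin (n - (i + 1) * r))) : ∀ x ∈ Bnat r n i S T, x < n := by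
  intro x hx
  rcases (mem_Bnat r n).mp hx with ⟨k, _, _, h2⟩ | ⟨t, _, rfl⟩
  · have hki : (k.val + 1) * r ≤ i * r := Nat.mul_le_mul_right r k.isLt
    have : i * r ≤ (i + 1) * r := Nat.mul_le_mul_right r (by omega)
    omega
  · have := t.isLt; omega

def Bf (i : ℕ) (hi : (i + 1) * r ≤ n) (S : Finset (Fin i))
    (T : Finset (Fin (n - (i + 1) * r))) : Finset (Fin n) :=
  (Bnat r n i S T).attachFin (Bnat_lt r n hi S T)

lemma mem_Bf {i : ℕ} {hi : (i + 1) * r ≤ n} {S : Finset (Fin i)}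
    {T : Finset (Fin (n - (i + 1) * r))} {x : Fin n} :
    x ∈ Bf r n i hi S T ↔ x.val ∈ Bnat r n i S T := Finset.mem_attachFin _

lemma card_Bf {i : ℕ} (hr : 0 < r) (hi : (i + 1) * r ≤ n) (S : Finset (Fin i))
    (T : Finset (Fin (n - (i + 1) * r))) :
    (Bf r n i hi S T).card = S.card * r + T.card := by
  rw [Bf, Finset.card_attachFin, card_Bnat r n hr]

def phiEmb (i : ℕ) (hi : (i + 1) * r ≤ n) : Fin r ↪ Fin n :=
  ⟨fun a => ⟨i * r + a.val, by have := a.isLt; rw [sm] at hi; omega⟩,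
   fun a b h => by
    simp only [Fin.mk.injEq] at h
    exact Fin.ext (by omega)⟩

def phi (i : ℕ) (hi : (i + 1) * r ≤ n) (J : Finset (Fin r)) : Finset (Fin n) :=
  J.map (phiEmb r n i hi)

lemma mem_phi {i : ℕ} {hi : (i + 1) * r ≤ n} {J : Finset (Fin r)} {x : Fin n} :
    x ∈ phi r n i hi J ↔ ∃ a ∈ J, x.val = i * r + a.val := by
  simp only [phi, phiEmb, Finset.mem_map, Function.Embedding.coeFn_mk, Fin.ext_iff]
  tauto

lemma phi_bounds {i : ℕ} {hi : (i + 1) * r ≤ n} {J : Finset (Fin r)} {x : Fin n}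
    (hx : x ∈ phi r n i hi J) : i * r ≤ x.val ∧ x.val < (i + 1) * r := by
  obtain ⟨a, _, he⟩ := (mem_phi r n).mp hx
  have := a.isLt
  rw [sm]
  omega

lemma card_phi {i : ℕ} (hi : (i + 1) * r ≤ n) (J : Finset (Fin r)) :
    (phi r n i hi J).card = J.card := Finset.card_map _


/-- If an element of `Bf i S T` lies in block `k` with `k ≤ i`, then `k < i` and `k ∈ S`. -/
lemma Bf_blk_mem {i : ℕ} {hi : (i + 1) * r ≤ n} {S : Finset (Fin i)}
    {T : Finset (Fin (n - (i + 1) * r))} (hr : 0 < r) {k : ℕ} (hk : k ≤ i) {x : Fin n}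
    (hx : x ∈ Bf r n i hi S T) (h1 : k * r ≤ x.val) (h2 : x.val < (k + 1) * r) :
    ∃ h : k < i, (⟨k, h⟩ : Fin i) ∈ S := by
  rcases (mem_Bnat r n).mp ((mem_Bf r n).mp hx) with ⟨⟨kv, hkv⟩, hk', a1, a2⟩ | ⟨t, _, he⟩
  · have : kv = k := blk_unique hr a1 a2 h1 h2
    subst this
    exact ⟨hkv, hk'⟩
  · exfalso
    have : (k + 1) * r ≤ (i + 1) * r := Nat.mul_le_mul_right r (by omega)
    omega

lemma blk_subset_Bf {i : ℕ} {hi : (i + 1) * r ≤ n} {S : Finset (Fin i)}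
    {T : Finset (Fin (n - (i + 1) * r))} {k : ℕ} (h : k < i) (hS : (⟨k, h⟩ : Fin i) ∈ S)
    {x : Fin n} (h1 : k * r ≤ x.val) (h2 : x.val < (k + 1) * r) : x ∈ Bf r n i hi S T :=
  (mem_Bf r n).mpr <| (mem_Bnat r n).mpr <| Or.inl ⟨⟨k, h⟩, hS, h1, h2⟩

lemma Bf_tail {i : ℕ} {hi : (i + 1) * r ≤ n} {S : Finset (Fin i)}
    {T : Finset (Fin (n - (i + 1) * r))} {x : Fin n} (hx : x ∈ Bf r n i hi S T)
    (h : (i + 1) * r ≤ x.val) : ∃ t ∈ T, x.val = (i + 1) * r + t.val := by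
  rcases (mem_Bnat r n).mp ((mem_Bf r n).mp hx) with ⟨k, _, _, a2⟩ | ⟨t, ht, he⟩
  · exfalso
    have h1 : (k.val + 1) * r ≤ i * r := Nat.mul_le_mul_right r k.isLt
    have h2 : i * r ≤ (i + 1) * r := Nat.mul_le_mul_right r (by omega)
    omega
  · exact ⟨t, ht, he⟩

lemma tail_mem_Bf {i : ℕ} {hi : (i + 1) * r ≤ n} {S : Finset (Fin i)}
    {T : Finset (Fin (n - (i + 1) * r))} {t : Fin (n - (i + 1) * r)} (ht : t ∈ T) :
    (⟨(i + 1) * r + t.val, by have := t.isLt; omega⟩ : Fin n) ∈ Bf r n i hi S T :=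
  (mem_Bf r n).mpr <| (mem_Bnat r n).mpr <| Or.inr ⟨t, ht, rfl⟩

/-- No element of `Bf i S T` lies in block `i`. -/
lemma Bf_not_blk_self {i : ℕ} {hi : (i + 1) * r ≤ n} {S : Finset (Fin i)}
    {T : Finset (Fin (n - (i + 1) * r))} (hr : 0 < r) {x : Fin n}
    (hx : x ∈ Bf r n i hi S T) (h1 : i * r ≤ x.val) (h2 : x.val < (i + 1) * r) : False := by
  obtain ⟨h, _⟩ := Bf_blk_mem r n hr le_rfl hx h1 h2
  omega

/-- No element of `Bf i S T` lies in the image of `phi i`. -/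
lemma Bf_phi_disj {i : ℕ} {hi : (i + 1) * r ≤ n} {S : Finset (Fin i)}
    {T : Finset (Fin (n - (i + 1) * r))} (hr : 0 < r) {J : Finset (Fin r)} {x : Fin n}
    (hx : x ∈ Bf r n i hi S T) (hx' : x ∈ phi r n i hi J) : False := by
  obtain ⟨h1, h2⟩ := phi_bounds r n hx'
  exact Bf_not_blk_self r n hr hx h1 h2


abbrev Idx (p : ℤ) : Type :=
  Σ i : Fin (n / r), Σ S : Finset (Fin i.val),
    {T : Finset (Fin (n - (i.val + 1) * r)) //
      (T.card : ℤ) = p + (((n - r) / 2 : ℕ) : ℤ) - S.card * r}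



lemma card_subtype_cardEq (m : ℕ) (t : ℤ) :
    Fintype.card {T : Finset (Fin m) // (T.card : ℤ) = t} = zbc m t := by
  rcases le_or_gt 0 t with ht | ht
  · rw [zbc, if_pos ht]
    rw [Fintype.card_congr (Equiv.subtypeEquivRight (q := fun T : Finset (Fin m) =>
      T.card = t.toNat) (fun T => by omega))]
    rw [Fintype.card_finset_len, Fintype.card_fin]
  · rw [zbc, if_neg (by omega)]
    rw [Fintype.card_eq_zero_iff]
    exact ⟨fun T => by have := T.prop; omega⟩

lemma card_Idx (p : ℤ) : Fintype.card (Idx r n p) = fp r p n := by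
  show Fintype.card (Σ i : Fin (n / r), Σ S : Finset (Fin i.val),
    {T : Finset (Fin (n - (i.val + 1) * r)) //
      (T.card : ℤ) = p + (((n - r) / 2 : ℕ) : ℤ) - S.card * r}) = _
  rw [Fintype.card_sigma]
  rw [Fin.sum_univ_eq_sum_range
    (fun i => Fintype.card (Σ S : Finset (Fin i), {T : Finset (Fin (n - (i + 1) * r)) //
      (T.card : ℤ) = p + (((n - r) / 2 : ℕ) : ℤ) - S.card * r}))]
  refine Finset.sum_congr rfl fun i _ => ?_
  rw [Fintype.card_sigma]
  have h1 : ∀ S : Finset (Fin i),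
      Fintype.card {T : Finset (Fin (n - (i + 1) * r)) //
        (T.card : ℤ) = p + (((n - r) / 2 : ℕ) : ℤ) - S.card * r}
      = zbc (n - (i + 1) * r) (p + (((n - r) / 2 : ℕ) : ℤ) - ((S.card * r : ℕ) : ℤ)) := by
    intro S
    rw [card_subtype_cardEq]
    congr 1
  rw [Finset.sum_congr rfl fun S _ => h1 S]
  have h2 : ∑ S : Finset (Fin i),
      zbc (n - (i + 1) * r) (p + (((n - r) / 2 : ℕ) : ℤ) - ((S.card * r : ℕ) : ℤ))
      = ∑ S ∈ (Finset.univ : Finset (Fin i)).powerset,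
        zbc (n - (i + 1) * r) (p + (((n - r) / 2 : ℕ) : ℤ) - ((S.card * r : ℕ) : ℤ)) := by
    rw [Finset.powerset_univ]
  rw [h2, Finset.sum_powerset_apply_card
    (fun j => zbc (n - (i + 1) * r) (p + (((n - r) / 2 : ℕ) : ℤ) - ((j * r : ℕ) : ℤ)))]
  rw [Finset.card_univ, Fintype.card_fin]
  exact Finset.sum_congr rfl fun j _ => by rw [smul_eq_mul]


lemma phi_mem_of_mem {i : ℕ} {hi : (i + 1) * r ≤ n} {J : Finset (Fin r)} {a : Fin r}
    (ha : a ∈ J) : (⟨i * r + a.val, by have := a.isLt; rw [sm] at hi; omega⟩ : Fin n)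
      ∈ phi r n i hi J :=
  (mem_phi r n).mpr ⟨a, ha, rfl⟩

/-- The copy property. -/
lemma isCopy (hr : 0 < r) {i : ℕ} (hi : (i + 1) * r ≤ n) (S : Finset (Fin i))
    (T : Finset (Fin (n - (i + 1) * r))) :
    IsNTSCopy r n (fun J => Bf r n i hi S T ∪ phi r n i hi J.1) := by
  intro J K
  constructor
  · intro h
    exact Finset.union_subset_union_right (Finset.map_subset_map.mpr h)
  · intro h a ha
    have hx : (⟨i * r + a.val, by have := a.isLt; rw [sm] at hi; omega⟩ : Fin n)
        ∈ Bf r n i hi S T ∪ phi r n i hi K.1 := h (Finset.mem_union_right _ (phi_mem_of_mem r n ha))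
    rcases Finset.mem_union.mp hx with hx | hx
    · exact absurd hx (fun hx => Bf_not_blk_self r n hr hx (Nat.le_add_right _ _)
        (by have := a.isLt; show i * r + a.val < (i + 1) * r; rw [sm]; omega))
    · obtain ⟨b, hb, he⟩ := (mem_phi r n).mp hx
      have : b = a := Fin.ext (by simpa using he.symm)
      exact this ▸ hb

/-- Same-block containment forces equal parameters. -/
lemma same_i (hr : 0 < r) {i : ℕ} (hi : (i + 1) * r ≤ n) (S S' : Finset (Fin i))
    (T T' : Finset (Fin (n - (i + 1) * r)))
    (hcard : (Bf r n i hi S T).card = (Bf r n i hi S' T').card)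
    (J K : Finset (Fin r))
    (h : Bf r n i hi S T ∪ phi r n i hi J ⊆ Bf r n i hi S' T' ∪ phi r n i hi K) :
    S = S' ∧ T = T' := by
  have hBB : Bf r n i hi S T ⊆ Bf r n i hi S' T' := by
    intro x hx
    rcases Finset.mem_union.mp (h (Finset.mem_union_left _ hx)) with hx' | hx'
    · exact hx'
    · exact absurd hx' (fun hx' => Bf_phi_disj r n hr hx hx')
  have hBeq : Bf r n i hi S T = Bf r n i hi S' T' :=
    Finset.eq_of_subset_of_card_le hBB (le_of_eq hcard.symm)
  constructor
  · ext k
    constructor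
    · intro hk
      have hx : (⟨k.val * r, by
          have h1 : (k.val + 1) * r ≤ i * r := Nat.mul_le_mul_right r k.isLt
          have h2 : i * r ≤ (i + 1) * r := Nat.mul_le_mul_right r (by omega)
          rw [sm] at h1; omega⟩ : Fin n) ∈ Bf r n i hi S T :=
        blk_subset_Bf r n k.isLt (by simpa using hk) le_rfl
          (by show k.val * r < (k.val + 1) * r; rw [sm]; omega)
      rw [hBeq] at hx
      obtain ⟨hlt, hmem⟩ := Bf_blk_mem r n hr (le_of_lt k.isLt) hx le_rfl
        (by show k.val * r < (k.val + 1) * r; rw [sm]; omega)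
      simpa using hmem
    · intro hk
      have hx : (⟨k.val * r, by
          have h1 : (k.val + 1) * r ≤ i * r := Nat.mul_le_mul_right r k.isLt
          have h2 : i * r ≤ (i + 1) * r := Nat.mul_le_mul_right r (by omega)
          rw [sm] at h1; omega⟩ : Fin n) ∈ Bf r n i hi S' T' :=
        blk_subset_Bf r n k.isLt (by simpa using hk) le_rfl
          (by show k.val * r < (k.val + 1) * r; rw [sm]; omega)
      rw [← hBeq] at hx
      obtain ⟨hlt, hmem⟩ := Bf_blk_mem r n hr (le_of_lt k.isLt) hx le_rfl
        (by show k.val * r < (k.val + 1) * r; rw [sm]; omega)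
      simpa using hmem
  · ext t
    constructor
    · intro ht
      have hx := tail_mem_Bf r n (hi := hi) (S := S) ht
      rw [hBeq] at hx
      obtain ⟨t', ht', he⟩ := Bf_tail r n hx (Nat.le_add_right _ _)
      have he' : (i + 1) * r + t.val = (i + 1) * r + t'.val := he
      have : t' = t := Fin.ext (by omega)
      exact this ▸ ht'
    · intro ht
      have hx := tail_mem_Bf r n (hi := hi) (S := S') ht
      rw [← hBeq] at hx
      obtain ⟨t', ht', he⟩ := Bf_tail r n hx (Nat.le_add_right _ _)
      have he' : (i + 1) * r + t.val = (i + 1) * r + t'.val := he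
      have : t' = t := Fin.ext (by omega)
      exact this ▸ ht'


/-- Direction 1: lower-block copy is not contained in higher-block copy. -/
lemma lt_dir1 (hr : 0 < r) {i i' : ℕ} (hii : i < i') (hi : (i + 1) * r ≤ n)
    (hi' : (i' + 1) * r ≤ n) (S : Finset (Fin i)) (T : Finset (Fin (n - (i + 1) * r)))
    (S' : Finset (Fin i')) (T' : Finset (Fin (n - (i' + 1) * r)))
    (hcard : (Bf r n i hi S T).card = (Bf r n i' hi' S' T').card)
    (J K : Finset (Fin r)) (hJ : J.Nonempty) (hK : K.card < r)
    (h : Bf r n i hi S T ∪ phi r n i hi J ⊆ Bf r n i' hi' S' T' ∪ phi r n i' hi' K) :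
    False := by
  have hblk : (i + 1) * r ≤ i' * r := Nat.mul_le_mul_right r hii
  -- `phi i J ⊆ B'`
  have hphiB : phi r n i hi J ⊆ Bf r n i' hi' S' T' := by
    intro x hx
    obtain ⟨b1, b2⟩ := phi_bounds r n hx
    rcases Finset.mem_union.mp (h (Finset.mem_union_right _ hx)) with hx' | hx'
    · exact hx'
    · obtain ⟨c1, c2⟩ := phi_bounds r n hx'
      omega
  -- hence block `i` is in `S'`
  obtain ⟨a, ha⟩ := hJ
  have hxa := hphiB (phi_mem_of_mem r n ha)
  obtain ⟨hlt, hiS'⟩ := Bf_blk_mem r n hr (le_of_lt hii) hxa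
    (Nat.le_add_right _ _) (by have := a.isLt; show i * r + a.val < (i + 1) * r; rw [sm]; omega)
  -- thus the whole block `i` is inside `B'`
  have hMsub : phi r n i hi Finset.univ ⊆ Bf r n i' hi' S' T' := by
    intro y hy
    obtain ⟨b1, b2⟩ := phi_bounds r n hy
    exact blk_subset_Bf r n hlt hiS' b1 b2
  -- `B ⊆ (B' \ M_i) ∪ phi i' K`
  have hBsub : Bf r n i hi S T ⊆
      (Bf r n i' hi' S' T' \ phi r n i hi Finset.univ) ∪ phi r n i' hi' K := by
    intro x hx
    rcases Finset.mem_union.mp (h (Finset.mem_union_left _ hx)) with hx' | hx'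
    · refine Finset.mem_union_left _ (Finset.mem_sdiff.mpr ⟨hx', fun hc => ?_⟩)
      exact Bf_phi_disj r n hr hx hc
    · exact Finset.mem_union_right _ hx'
  have c1 : (Bf r n i hi S T).card ≤
      (Bf r n i' hi' S' T' \ phi r n i hi Finset.univ).card + (phi r n i' hi' K).card :=
    le_trans (Finset.card_le_card hBsub) (Finset.card_union_le _ _)
  have c2 : (Bf r n i' hi' S' T' \ phi r n i hi Finset.univ).card
      = (Bf r n i' hi' S' T').card - r := by
    rw [Finset.card_sdiff_of_subset hMsub, card_phi, Finset.card_univ, Fintype.card_fin]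
  have c3 : r ≤ (Bf r n i' hi' S' T').card := by
    have := Finset.card_le_card hMsub
    rwa [card_phi, Finset.card_univ, Fintype.card_fin] at this
  have c4 : (phi r n i' hi' K).card < r := by rwa [card_phi]
  omega

/-- Direction 2: higher-block copy is not contained in lower-block copy. -/
lemma lt_dir2 (hr : 0 < r) {i i' : ℕ} (hii : i < i') (hi : (i + 1) * r ≤ n)
    (hi' : (i' + 1) * r ≤ n) (S : Finset (Fin i)) (T : Finset (Fin (n - (i + 1) * r)))
    (S' : Finset (Fin i')) (T' : Finset (Fin (n - (i' + 1) * r)))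
    (hcard : (Bf r n i hi S T).card = (Bf r n i' hi' S' T').card)
    (J K : Finset (Fin r)) (hJ : J ≠ Finset.univ) (hK : K.Nonempty)
    (h : Bf r n i' hi' S' T' ∪ phi r n i' hi' K ⊆ Bf r n i hi S T ∪ phi r n i hi J) :
    False := by
  have hblk : (i + 1) * r ≤ i' * r := Nat.mul_le_mul_right r hii
  have hKB : phi r n i' hi' K ⊆ Bf r n i hi S T := by
    intro x hx
    obtain ⟨b1, b2⟩ := phi_bounds r n hx
    rcases Finset.mem_union.mp (h (Finset.mem_union_right _ hx)) with hx' | hx'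
    · exact hx'
    · obtain ⟨c1, c2⟩ := phi_bounds r n hx'
      omega
  by_cases hiS' : (⟨i, hii⟩ : Fin i') ∈ S'
  · -- block i fully inside B', forcing J = univ
    apply hJ
    rw [Finset.eq_univ_iff_forall]
    intro a
    have hy : (⟨i * r + a.val, by have := a.isLt; rw [sm] at hi; omega⟩ : Fin n)
        ∈ Bf r n i' hi' S' T' :=
      blk_subset_Bf r n hii hiS' (Nat.le_add_right _ _)
        (by have := a.isLt; show i * r + a.val < (i + 1) * r; rw [sm]; omega)
    rcases Finset.mem_union.mp (h (Finset.mem_union_left _ hy)) with hy' | hy'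
    · exact absurd hy' (fun hy' => Bf_not_blk_self r n hr hy' (Nat.le_add_right _ _)
        (by have := a.isLt; show i * r + a.val < (i + 1) * r; rw [sm]; omega))
    · obtain ⟨b, hb, he⟩ := (mem_phi r n).mp hy'
      have he' : i * r + a.val = i * r + b.val := he
      have : b = a := Fin.ext (by omega)
      exact this ▸ hb
  · -- block i misses B' entirely, so B' ⊆ B and hence B' = B
    have hB'B : Bf r n i' hi' S' T' ⊆ Bf r n i hi S T := by
      intro x hx
      rcases Finset.mem_union.mp (h (Finset.mem_union_left _ hx)) with hx' | hx'
      · exact hx'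
      · exfalso
        obtain ⟨b1, b2⟩ := phi_bounds r n hx'
        obtain ⟨_, hmem⟩ := Bf_blk_mem r n hr (le_of_lt hii) hx b1 b2
        exact hiS' hmem
    have hBeq : Bf r n i' hi' S' T' = Bf r n i hi S T :=
      Finset.eq_of_subset_of_card_le hB'B (le_of_eq hcard)
    obtain ⟨a, ha⟩ := hK
    have hx : (⟨i' * r + a.val, by have := a.isLt; rw [sm] at hi'; omega⟩ : Fin n)
        ∈ Bf r n i' hi' S' T' := by
      rw [hBeq]
      exact hKB (phi_mem_of_mem r n ha)
    obtain ⟨hlt, _⟩ := Bf_blk_mem r n hr le_rfl hx (Nat.le_add_right _ _)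
      (by have := a.isLt; show i' * r + a.val < (i' + 1) * r; rw [sm]; omega)
    omega


lemma hi_of_lt {i : ℕ} (h : i < n / r) : (i + 1) * r ≤ n :=
  le_trans (Nat.mul_le_mul_right r h) (Nat.div_mul_le_self n r)

def idxCopy (p : ℤ) (w : Idx r n p) (J : NTS r) : Finset (Fin n) :=
  Bf r n w.1.val (hi_of_lt r n w.1.isLt) w.2.1 w.2.2.val
    ∪ phi r n w.1.val (hi_of_lt r n w.1.isLt) J.1

lemma card_idxB (hr : 0 < r) (p : ℤ) (w : Idx r n p) :
    (((Bf r n w.1.val (hi_of_lt r n w.1.isLt) w.2.1 w.2.2.val).card : ℤ))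
      = p + (((n - r) / 2 : ℕ) : ℤ) := by
  have h := w.2.2.prop
  rw [card_Bf r n hr, Nat.cast_add, Nat.cast_mul]
  linarith

lemma idx_unrel (hr : 0 < r) (p : ℤ) (w w' : Idx r n p) (hne : w ≠ w') (J K : NTS r) :
    ¬ idxCopy r n p w J ⊆ idxCopy r n p w' K := by
  intro h
  have hcard : (Bf r n w.1.val (hi_of_lt r n w.1.isLt) w.2.1 w.2.2.val).card
      = (Bf r n w'.1.val (hi_of_lt r n w'.1.isLt) w'.2.1 w'.2.2.val).card := by
    have h1 := card_idxB r n hr p w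
    have h2 := card_idxB r n hr p w'
    exact_mod_cast h1.trans h2.symm
  have hKcard : K.1.card < r := by
    have := Finset.card_lt_card (Finset.ssubset_univ_iff.mpr K.2.2)
    simpa using this
  obtain ⟨i, S, T⟩ := w
  obtain ⟨i', S', T'⟩ := w'
  rcases lt_trichotomy i.val i'.val with hlt | heq | hgt
  · exact lt_dir1 r n hr hlt _ _ S T.1 S' T'.1 hcard J.1 K.1 J.2.1 hKcard h
  · have : i = i' := Fin.ext heq
    subst this
    obtain ⟨hS, hT⟩ := same_i r n hr _ S S' T.1 T'.1 hcard J.1 K.1 h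
    subst hS
    have : T = T' := Subtype.ext hT
    subst this
    exact hne rfl
  · exact lt_dir2 r n hr hgt _ _ S' T'.1 S T.1 hcard.symm K.1 J.1 K.2.2 J.2.1 h

end Stmt19

/-- For `r ≥ 3`, `p ∈ ℤ`, and `n ≥ r`, there exist `f_p(n)` pairwise unrelated copies of
`FSP(r,0,r)` in the powerset of `[n]`; i.e. `f_p(n) ≤ Sp(FSP(r,0,r), n)`. -/
theorem stmt_19 (r : ℕ) (p : ℤ) (n : ℕ) (hr : 3 ≤ r) (hn : r ≤ n) :
    ∃ e : Fin (fp r p n) → NTS r → Finset (Fin n),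
      (∀ i, IsNTSCopy r n (e i)) ∧
      (∀ i j, i ≠ j → ∀ J K : NTS r, ¬ e i J ⊆ e j K) := by
  classical
  have hr0 : 0 < r := by omega
  let E : Stmt19.Idx r n p ≃ Fin (fp r p n) :=
    Fintype.equivFinOfCardEq (Stmt19.card_Idx r n p)
  refine ⟨fun k => Stmt19.idxCopy r n p (E.symm k), ?_, ?_⟩
  · intro k
    exact Stmt19.isCopy r n hr0 _ _ _
  · intro k k' hkk' J K
    exact Stmt19.idx_unrel r n hr0 p _ _ (E.symm.injective.ne hkk') J K
end
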